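/- arXiv:1410.8345 — 7 statements merged into one kernel-verified Lean document; each statement's English description precedes it below -/
import Mathlib

section
/- (Energy identity (9).) Let N ≥ 2, λ > 0, ζ ∈ ℝ, R > 0, and let f : ℝ → ℝ be continuous with F(u) := ∫₀ᵘ f(s) ds. Let u ∈ C²([0,R)) satisfy |u'(r)| < 1 on [0,R), u(0) = ζ, u'(0) = 0, and (u'(r)/√(1−u'(r)²))' + ((N−1)/r)·u'(r)/√(1−u'(r)²) + λ·f(u(r)) = 0 for all r ∈ (0,R). Then for every r ∈ (0,R): H(u'(r)) + (N−1)·∫₀^r u'(s)²/(s·√(1−u'(s)²)) ds = λ·(F(ζ) − F(u(r))), where H(t) := (1−√(1−t²))/√(1−t²). -/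
/-!
Write `v = u'/√(1-u'²)`, so that `H(u') = √(1+v²) - 1`. Wherever `v` is differentiable,
`(√(1+v²))' = u' v'`, and by the equation `u' v' = -(N-1) u'²/(r√(1-u'²)) - λ (F ∘ u)'`. Hence
`E = √(1+v²) + (N-1) ∫₀^r u'²/(s√(1-u'²)) ds + λ F(u)` has zero derivative on `(0, R)`. Since `u'` is
`C¹` with `u'(0) = 0`, the integrand is bounded near `0`, so `E` is continuous on `[0, r]` and
`E(r) = E(0) = 1 + λ F(ζ)`.
-/

open Set Filter MeasureTheory intervalIntegral Topology

lemma sqrt_one_sub_sq_pos {t : ℝ} (ht : |t| < 1) : 0 < √(1 - t ^ 2) :=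
  Real.sqrt_pos.2 (by nlinarith [sq_abs t, abs_nonneg t])

lemma sqrt_one_add_sq_div_sqrt_one_sub_sq {t : ℝ} (ht : |t| < 1) :
    √(1 + (t / √(1 - t ^ 2)) ^ 2) = 1 / √(1 - t ^ 2) := by
  have hpos := sqrt_one_sub_sq_pos ht
  have hsq : √(1 - t ^ 2) ^ 2 = 1 - t ^ 2 := Real.sq_sqrt (by nlinarith [sq_abs t, abs_nonneg t])
  have : 1 + (t / √(1 - t ^ 2)) ^ 2 = (1 / √(1 - t ^ 2)) ^ 2 := by
    field_simp
    linarith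
  rw [this, Real.sqrt_sq (by positivity)]

lemma HasDerivAt.sqrt_one_add_sq_div_sqrt_one_sub_sq {φ : ℝ → ℝ} {D x : ℝ} (hx : |φ x| < 1)
    (h : HasDerivAt (fun s => φ s / √(1 - φ s ^ 2)) D x) :
    HasDerivAt (fun s => √(1 + (φ s / √(1 - φ s ^ 2)) ^ 2)) (φ x * D) x := by
  have hpos := _root_.sqrt_one_sub_sq_pos hx
  convert ((h.fun_pow 2).const_add 1).sqrt (by positivity : (0:ℝ) < _).ne' using 1
  rw [_root_.sqrt_one_add_sq_div_sqrt_one_sub_sq hx]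
  norm_num
  field_simp

lemma ContDiffOn.contDiffOn_deriv_of_hasDerivWithinAt {n : WithTop ℕ∞} {u u' : ℝ → ℝ} {s : Set ℝ}
    (hs : UniqueDiffOn ℝ s) (hu : ContDiffOn ℝ (n + 1) u s)
    (hu' : ∀ x ∈ s, HasDerivWithinAt u (u' x) s x) : ContDiffOn ℝ n u' s :=
  ((contDiffOn_succ_iff_derivWithin hs).1 hu).2.2.congr fun x hx =>
    ((hu' x hx).derivWithin (hs x hx)).symm

lemma ContDiffOn.exists_abs_le_mul_of_eq_zero {φ : ℝ → ℝ} {r : ℝ} (hr : 0 < r)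
    (hφ : ContDiffOn ℝ 1 φ (Icc 0 r)) (hφ0 : φ 0 = 0) : ∃ C, ∀ s ∈ Icc 0 r, |φ s| ≤ C * s := by
  have hUD : UniqueDiffOn ℝ (Icc 0 r) := uniqueDiffOn_Icc hr
  obtain ⟨C, hC⟩ := isCompact_Icc.exists_bound_of_continuousOn
    (hφ.continuousOn_derivWithin hUD le_rfl)
  refine ⟨C, fun s hs => ?_⟩
  have := (convex_Icc 0 r).norm_image_sub_le_of_norm_derivWithin_le
    (hφ.differentiableOn one_ne_zero) hC (left_mem_Icc.2 hr.le) hs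
  simpa [hφ0, abs_of_nonneg hs.1] using this

lemma continuousOn_sq_div_mul_sqrt_one_sub_sq {φ : ℝ → ℝ} {s : Set ℝ} (hφ : ContinuousOn φ s)
    (hs : (0 : ℝ) ∉ s) (hφ1 : ∀ x ∈ s, |φ x| < 1) :
    ContinuousOn (fun x => φ x ^ 2 / (x * √(1 - φ x ^ 2))) s :=
  ContinuousOn.div (by fun_prop) (by fun_prop) fun x hx =>
    mul_ne_zero (ne_of_mem_of_not_mem hx hs) (sqrt_one_sub_sq_pos (hφ1 x hx)).ne'

lemma intervalIntegrable_sq_div_mul_sqrt_one_sub_sq {φ : ℝ → ℝ} {r : ℝ} (hr : 0 < r)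
    (hφ : ContDiffOn ℝ 1 φ (Icc 0 r)) (hφ0 : φ 0 = 0) (hφ1 : ∀ s ∈ Icc 0 r, |φ s| < 1) :
    IntervalIntegrable (fun s => φ s ^ 2 / (s * √(1 - φ s ^ 2))) volume 0 r := by
  have hφc := hφ.continuousOn
  have hsqrt : ∀ s ∈ Icc 0 r, 0 < √(1 - φ s ^ 2) := fun s hs => sqrt_one_sub_sq_pos (hφ1 s hs)
  obtain ⟨C, hC⟩ := hφ.exists_abs_le_mul_of_eq_zero hr hφ0
  have hC0 : 0 ≤ C := nonneg_of_mul_nonneg_left ((abs_nonneg _).trans (hC r ⟨hr.le, le_rfl⟩)) hr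
  obtain ⟨M, hM⟩ := isCompact_Icc.exists_bound_of_continuousOn
    (hφc.div (by fun_prop) fun s hs => (hsqrt s hs).ne')
  have hbound : ∀ s ∈ Ioc 0 r, ‖φ s ^ 2 / (s * √(1 - φ s ^ 2))‖ ≤ C * M := by
    intro s hs
    have hsIcc : s ∈ Icc 0 r := Ioc_subset_Icc_self hs
    have hφs : |φ s / s| ≤ C := by
      rw [abs_div, abs_of_pos hs.1, div_le_iff₀ hs.1]
      exact hC s hsIcc
    have hfactor : φ s ^ 2 / (s * √(1 - φ s ^ 2)) = φ s / s * (φ s / √(1 - φ s ^ 2)) := by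
      field_simp
    rw [hfactor, norm_mul]
    exact mul_le_mul hφs (hM s hsIcc) (norm_nonneg _) hC0
  have hmeas := continuousOn_sq_div_mul_sqrt_one_sub_sq (hφc.mono Ioc_subset_Icc_self)
    (fun h => lt_irrefl _ h.1) fun s hs => hφ1 s (Ioc_subset_Icc_self hs)
  refine (intervalIntegrable_iff_integrableOn_Ioc_of_le hr.le).2
    ⟨hmeas.aestronglyMeasurable measurableSet_Ioc, ?_⟩
  exact .restrict_of_bounded (C := C * M) measure_Ioc_lt_top
    (ae_restrict_of_forall_mem measurableSet_Ioc hbound)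

noncomputable def radialEnergy (N lam : ℝ) (f u u' : ℝ → ℝ) (r : ℝ) : ℝ :=
  √(1 + (u' r / √(1 - u' r ^ 2)) ^ 2) +
    (N - 1) * (∫ s in (0:ℝ)..r, u' s ^ 2 / (s * √(1 - u' s ^ 2))) + lam * ∫ s in (0:ℝ)..u r, f s

section radialEnergy

variable {N lam : ℝ} {f u u' : ℝ → ℝ}

lemma hasDerivAt_radialEnergy {x : ℝ} (hf : Continuous f) (hx : |u' x| < 1)
    (hode : HasDerivAt (fun s => u' s / √(1 - u' s ^ 2))
      (-((N - 1) / x * (u' x / √(1 - u' x ^ 2)) + lam * f (u x))) x)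
    (hu : HasDerivAt u (u' x) x)
    (hint : IntervalIntegrable (fun s => u' s ^ 2 / (s * √(1 - u' s ^ 2))) volume 0 x)
    (hmeas : StronglyMeasurableAtFilter (fun s => u' s ^ 2 / (s * √(1 - u' s ^ 2))) (𝓝 x))
    (hcont : ContinuousAt (fun s => u' s ^ 2 / (s * √(1 - u' s ^ 2))) x) :
    HasDerivAt (radialEnergy N lam f u u') 0 x := by
  have hF := (hf.integral_hasStrictDerivAt 0 (u x)).hasDerivAt.comp x hu
  exact (((hode.sqrt_one_add_sq_div_sqrt_one_sub_sq hx).add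
    ((integral_hasDerivAt_right hint hmeas hcont).const_mul (N - 1))).add
    (hF.const_mul lam)).congr_deriv (by ring)

lemma continuousOn_radialEnergy {r : ℝ} (hf : Continuous f) (hu : ContinuousOn u (Icc 0 r))
    (hu' : ContinuousOn u' (Icc 0 r)) (hu'1 : ∀ s ∈ Icc 0 r, |u' s| < 1)
    (hint : IntervalIntegrable (fun s => u' s ^ 2 / (s * √(1 - u' s ^ 2))) volume 0 r) :
    ContinuousOn (radialEnergy N lam f u u') (Icc 0 r) := by
  have hsqrt : ContinuousOn (fun s => √(1 - u' s ^ 2)) (Icc 0 r) := by fun_prop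
  have hv : ContinuousOn (fun s => u' s / √(1 - u' s ^ 2)) (Icc 0 r) :=
    hu'.div hsqrt fun s hs => (sqrt_one_sub_sq_pos (hu'1 s hs)).ne'
  have hI := (continuousOn_primitive_interval' hint left_mem_uIcc).mono Icc_subset_uIcc
  have hF := (continuous_primitive (μ := volume) hf.intervalIntegrable 0).comp_continuousOn hu
  change ContinuousOn (fun r => radialEnergy N lam f u u' r) _
  unfold radialEnergy
  fun_prop

lemma radialEnergy_zero (hu'0 : u' 0 = 0) :
    radialEnergy N lam f u u' 0 = 1 + lam * ∫ s in (0:ℝ)..u 0, f s := by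
  simp [radialEnergy, hu'0]

lemma radialEnergy_eq_radialEnergy_zero {R r : ℝ} (hf : Continuous f)
    (hu : ContDiffOn ℝ 2 u (Ico 0 R))
    (hu' : ∀ x ∈ Ico 0 R, HasDerivWithinAt u (u' x) (Ico 0 R) x)
    (hu'1 : ∀ x ∈ Ico 0 R, |u' x| < 1) (hu'0 : u' 0 = 0)
    (hode : ∀ x ∈ Ico 0 R, 0 < x →
      HasDerivWithinAt (fun s => u' s / √(1 - u' s ^ 2))
        (-((N - 1) / x * (u' x / √(1 - u' x ^ 2)) + lam * f (u x))) (Ico 0 R) x)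
    (hr : r ∈ Ioo 0 R) :
    radialEnergy N lam f u u' r = radialEnergy N lam f u u' 0 := by
  have hIcc : Icc 0 r ⊆ Ico 0 R := Icc_subset_Ico_right hr.2
  have hu'C1 : ContDiffOn ℝ 1 u' (Ico 0 R) :=
    hu.contDiffOn_deriv_of_hasDerivWithinAt (uniqueDiffOn_Ico 0 R) hu'
  have hint := intervalIntegrable_sq_div_mul_sqrt_one_sub_sq hr.1 (hu'C1.mono hIcc) hu'0
    fun s hs => hu'1 s (hIcc hs)
  have hg := continuousOn_sq_div_mul_sqrt_one_sub_sq (s := Ioo 0 R)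
    (hu'C1.continuousOn.mono Ioo_subset_Ico_self) (fun h => lt_irrefl _ h.1)
    fun x hx => hu'1 x (Ioo_subset_Ico_self hx)
  have hderiv : ∀ x ∈ Ioo 0 r, HasDerivAt (radialEnergy N lam f u u') 0 x := by
    intro x hx
    have hxR : x ∈ Ioo 0 R := ⟨hx.1, hx.2.trans hr.2⟩
    have hnhds : Ico 0 R ∈ 𝓝 x := mem_of_superset (isOpen_Ioo.mem_nhds hxR) Ioo_subset_Ico_self
    have hxIco := Ioo_subset_Ico_self hxR
    exact hasDerivAt_radialEnergy hf (hu'1 x hxIco) ((hode x hxIco hx.1).hasDerivAt hnhds)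
      ((hu' x hxIco).hasDerivAt hnhds)
      (hint.mono_set (uIcc_subset_uIcc_left (Icc_subset_uIcc (Ioo_subset_Icc_self hx))))
      (hg.stronglyMeasurableAtFilter isOpen_Ioo x hxR) (hg.continuousAt (isOpen_Ioo.mem_nhds hxR))
  obtain ⟨c, hc, hslope⟩ := exists_hasDerivAt_eq_slope _ _ hr.1
    (continuousOn_radialEnergy hf (hu.continuousOn.mono hIcc) (hu'C1.continuousOn.mono hIcc)
      (fun s hs => hu'1 s (hIcc hs)) hint) hderiv
  rw [eq_comm, div_eq_zero_iff, sub_eq_zero] at hslope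
  exact hslope.resolve_right (sub_ne_zero.2 hr.1.ne')

end radialEnergy

theorem energy_identity_general
    (N : ℕ) (lam : ℝ) (ζ R : ℝ)
    (f : ℝ → ℝ) (hf : Continuous f)
    (u u' : ℝ → ℝ)
    (hu : ContDiffOn ℝ 2 u (Set.Ico 0 R))
    (hu' : ∀ r ∈ Set.Ico (0:ℝ) R, HasDerivWithinAt u (u' r) (Set.Ico 0 R) r)
    (hu'bd : ∀ r ∈ Set.Ico (0:ℝ) R, |u' r| < 1)
    (hu0 : u 0 = ζ) (hu'0 : u' 0 = 0)
    (hode : ∀ r ∈ Set.Ico (0:ℝ) R, 0 < r →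
      HasDerivWithinAt (fun s => u' s / Real.sqrt (1 - (u' s) ^ 2))
        (-(((N : ℝ) - 1) / r * (u' r / Real.sqrt (1 - (u' r) ^ 2)) + lam * f (u r)))
        (Set.Ico 0 R) r) :
    ∀ r ∈ Set.Ioo (0:ℝ) R,
      (1 - Real.sqrt (1 - (u' r) ^ 2)) / Real.sqrt (1 - (u' r) ^ 2) +
        ((N : ℝ) - 1) * ∫ s in (0:ℝ)..r, (u' s) ^ 2 / (s * Real.sqrt (1 - (u' s) ^ 2)) =
      lam * ((∫ s in (0:ℝ)..ζ, f s) - ∫ s in (0:ℝ)..(u r), f s) := by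
  intro r hr
  have hconst := radialEnergy_eq_radialEnergy_zero hf hu hu' hu'bd hu'0 hode hr
  have hr1 : |u' r| < 1 := hu'bd r (Ioo_subset_Ico_self hr)
  rw [radialEnergy_zero hu'0, hu0, radialEnergy, sqrt_one_add_sq_div_sqrt_one_sub_sq hr1] at hconst
  have hsqrt := sqrt_one_sub_sq_pos hr1
  rw [sub_div, div_self hsqrt.ne']
  linarith

/-- Energy identity (9): for a solution of the radial IVP on `[0,R)`,
`H(u'(r)) + (N-1)∫₀^r u'(s)²/(s√(1-u'(s)²)) ds = λ(F(ζ) - F(u(r)))` for all `r ∈ (0,R)`,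
where `H(t) = (1-√(1-t²))/√(1-t²)` and `F(u) = ∫₀ᵘ f`. -/
theorem energy_identity
    (N : ℕ) (hN : 2 ≤ N) (lam : ℝ) (hlam : 0 < lam) (ζ R : ℝ) (hR : 0 < R)
    (f : ℝ → ℝ) (hf : Continuous f)
    (u u' : ℝ → ℝ)
    (hu : ContDiffOn ℝ 2 u (Set.Ico 0 R))
    (hu' : ∀ r ∈ Set.Ico (0:ℝ) R, HasDerivWithinAt u (u' r) (Set.Ico 0 R) r)
    (hu'bd : ∀ r ∈ Set.Ico (0:ℝ) R, |u' r| < 1)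
    (hu0 : u 0 = ζ) (hu'0 : u' 0 = 0)
    (hode : ∀ r ∈ Set.Ico (0:ℝ) R, 0 < r →
      HasDerivWithinAt (fun s => u' s / Real.sqrt (1 - (u' s) ^ 2))
        (-(((N : ℝ) - 1) / r * (u' r / Real.sqrt (1 - (u' r) ^ 2)) + lam * f (u r)))
        (Set.Ico 0 R) r) :
    ∀ r ∈ Set.Ioo (0:ℝ) R,
      (1 - Real.sqrt (1 - (u' r) ^ 2)) / Real.sqrt (1 - (u' r) ^ 2) +
        ((N : ℝ) - 1) * ∫ s in (0:ℝ)..r, (u' s) ^ 2 / (s * Real.sqrt (1 - (u' s) ^ 2)) =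
      lam * ((∫ s in (0:ℝ)..ζ, f s) - ∫ s in (0:ℝ)..(u r), f s) :=
  energy_identity_general N lam ζ R f hf u u' hu hu' hu'bd hu0 hu'0 hode
end

section
/- (Local existence for the singular initial value problem.) Let N ≥ 2, λ > 0, ζ ∈ ℝ, and let f : ℝ → ℝ be locally Lipschitz. Then there exists δ > 0 and a function u ∈ C²([0,δ]) with u(0) = ζ, u'(0) = 0, |u'(r)| < 1 for all r ∈ [0,δ], satisfying (u'(r)/√(1−u'(r)²))' + ((N−1)/r)·u'(r)/√(1−u'(r)²) + λ·f(u(r)) = 0 for all r ∈ (0,δ]. Equivalently, u satisfies the fixed point equation u(r) = ζ + ∫₀^r (φ')^{-1}( −(1/t^{N−1})∫₀^t s^{N−1} λ f(u(s)) ds ) dt on [0,δ], where φ'(s) = s/√(1−s²). Moreover u is the unique solution of this fixed point equation in a closed ball of C([0,δ]) centered at the constant function ζ. -/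
open Set Filter

/-!
Substituting `s = tσ` writes the flux `-(1/tⁿ) ∫₀ᵗ sⁿ h(s) ds` as `-t ∫₀¹ σⁿ h(tσ) dσ`:
it is `C¹` on all of `ℝ`, including `t = 0`, so every continuous fixed point of the Picard
map is `C²` and solves the ODE for `r > 0`. Since `|(φ')⁻¹| < 1`, the Picard map moves no
function by more than `δ` on `[0,δ]`. Replacing `λf` by a global `K`-Lipschitz extension of
its restriction to `[ζ-ε, ζ+ε]` makes the map a `Kδ²`-contraction of `C([0,δ])`, and for
`δ ≤ ε` its fixed point stays in the ball, where the extension agrees with `λf`.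
-/

open Real intervalIntegral
open scoped Interval

noncomputable def phiDerivInv (y : ℝ) : ℝ := y / √(1 + y ^ 2)

lemma phiDerivInv_eq_sin_arctan : phiDerivInv = sin ∘ arctan :=
  funext fun y => (sin_arctan y).symm

lemma phiDerivInv_zero : phiDerivInv 0 = 0 := by simp [phiDerivInv]

lemma contDiff_phiDerivInv {k : WithTop ℕ∞} : ContDiff ℝ k phiDerivInv := by
  rw [phiDerivInv_eq_sin_arctan]
  exact contDiff_sin.comp contDiff_arctan

lemma lipschitzWith_arctan : LipschitzWith 1 arctan := by
  refine lipschitzWith_of_nnnorm_deriv_le differentiable_arctan fun x => ?_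
  rw [← NNReal.coe_le_coe, coe_nnnorm, Real.deriv_arctan, norm_eq_abs, NNReal.coe_one,
    abs_of_pos (by positivity)]
  exact div_le_one_of_le₀ (by nlinarith [sq_nonneg x]) (by positivity)

lemma lipschitzWith_phiDerivInv : LipschitzWith 1 phiDerivInv := by
  rw [phiDerivInv_eq_sin_arctan]
  simpa using lipschitzWith_sin.comp lipschitzWith_arctan

lemma abs_phiDerivInv_sub_le (a b : ℝ) : |phiDerivInv a - phiDerivInv b| ≤ |a - b| := by
  simpa [dist_eq] using lipschitzWith_phiDerivInv.dist_le_mul a b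

lemma abs_phiDerivInv_lt_one (y : ℝ) : |phiDerivInv y| < 1 := by
  rw [phiDerivInv_eq_sin_arctan, Function.comp_apply, ← sq_lt_one_iff_abs_lt_one, sin_sq]
  linarith [pow_pos (cos_arctan_pos y) 2]

lemma phiDerivInv_div_sqrt (y : ℝ) : phiDerivInv y / √(1 - phiDerivInv y ^ 2) = y := by
  rw [phiDerivInv_eq_sin_arctan, Function.comp_apply, ← cos_sq', sqrt_sq (cos_arctan_pos y).le,
    ← tan_eq_sin_div_cos, tan_arctan]

-- `φ'(u'(t))` for a radial solution `u`, with `n = N - 1` and `h = λ f ∘ u`.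
noncomputable def radialFlux (n : ℕ) (h : ℝ → ℝ) (t : ℝ) : ℝ :=
  -(1 / t ^ n) * ∫ s in (0:ℝ)..t, s ^ n * h s

noncomputable def weightedMean (n : ℕ) (h : ℝ → ℝ) (t : ℝ) : ℝ :=
  ∫ σ in (0:ℝ)..1, σ ^ n * h (t * σ)

section radialFlux

variable {n : ℕ} {h h₁ h₂ : ℝ → ℝ}

lemma radialFlux_zero (n : ℕ) (h : ℝ → ℝ) : radialFlux n h 0 = 0 := by simp [radialFlux]

lemma radialFlux_eq_neg_mul_weightedMean (n : ℕ) (h : ℝ → ℝ) (t : ℝ) :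
    radialFlux n h t = -(t * weightedMean n h t) := by
  rcases eq_or_ne t 0 with rfl | ht
  · simp [radialFlux_zero]
  have hsub :
      t • ∫ σ in (0:ℝ)..1, (t * σ) ^ n * h (t * σ) = ∫ s in (0:ℝ)..t, s ^ n * h s := by
    simpa using smul_integral_comp_mul_left (fun s => s ^ n * h s) t (a := 0) (b := 1)
  simp_rw [mul_pow, mul_assoc, integral_const_mul, smul_eq_mul] at hsub
  rw [radialFlux, weightedMean, ← hsub]
  field_simp

lemma continuous_weightedMean (hh : Continuous h) : Continuous (weightedMean n h) :=
  continuous_parametric_intervalIntegral_of_continuous' (by fun_prop) 0 1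

lemma continuous_radialFlux (hh : Continuous h) : Continuous (radialFlux n h) := by
  simp_rw [funext (radialFlux_eq_neg_mul_weightedMean n h)]
  exact (continuous_id.mul (continuous_weightedMean hh)).neg

lemma radialFlux_congr {t : ℝ} (ht : 0 ≤ t) (h₁₂ : EqOn h₁ h₂ (Icc 0 t)) :
    radialFlux n h₁ t = radialFlux n h₂ t := by
  rw [radialFlux, radialFlux, integral_congr fun s hs => ?_]
  rw [uIcc_of_le ht] at hs
  simp only [h₁₂ hs]

lemma abs_radialFlux_sub_le (hh₁ : Continuous h₁) (hh₂ : Continuous h₂) {t η : ℝ}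
    (ht : 0 ≤ t) (hη : ∀ s ∈ Icc 0 t, |h₁ s - h₂ s| ≤ η) :
    |radialFlux n h₁ t - radialFlux n h₂ t| ≤ η * t := by
  have hmean : |weightedMean n h₁ t - weightedMean n h₂ t| ≤ η := by
    rw [weightedMean, weightedMean,
      ← integral_sub ((by fun_prop : Continuous _).intervalIntegrable _ _)
      ((by fun_prop : Continuous _).intervalIntegrable _ _)]
    have hbound :
        ∀ σ ∈ Ι (0:ℝ) 1, ‖σ ^ n * h₁ (t * σ) - σ ^ n * h₂ (t * σ)‖ ≤ η := by
      intro σ hσ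
      rw [uIoc_of_le zero_le_one] at hσ
      rw [← mul_sub, norm_mul, norm_pow, norm_eq_abs, norm_eq_abs, abs_of_pos hσ.1]
      exact (mul_le_of_le_one_left (abs_nonneg _) (pow_le_one₀ hσ.1.le hσ.2)).trans
        (hη _ ⟨by nlinarith [hσ.1], by nlinarith [hσ.2]⟩)
    simpa using norm_integral_le_of_norm_le_const hbound
  have hdiff : radialFlux n h₁ t - radialFlux n h₂ t
      = -(t * (weightedMean n h₁ t - weightedMean n h₂ t)) := by
    rw [radialFlux_eq_neg_mul_weightedMean, radialFlux_eq_neg_mul_weightedMean]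
    ring
  rw [hdiff, abs_neg, abs_mul, abs_of_nonneg ht, mul_comm]
  exact mul_le_mul_of_nonneg_right hmean ht

lemma hasDerivAt_radialFlux_of_ne (hh : Continuous h) {t : ℝ} (ht : t ≠ 0) :
    HasDerivAt (radialFlux n h) (-(n / t * radialFlux n h t + h t)) t := by
  have hinv := ((hasDerivAt_pow n t).fun_inv (pow_ne_zero n ht)).fun_neg
  have hprim := (by fun_prop : Continuous fun s : ℝ => s ^ n * h s)
    |>.integral_hasStrictDerivAt 0 t |>.hasDerivAt
  have hflux (t : ℝ) : radialFlux n h t = -(t ^ n)⁻¹ * ∫ s in (0:ℝ)..t, s ^ n * h s := by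
    rw [radialFlux, one_div]
  refine ((hinv.fun_mul hprim).congr_of_eventuallyEq (.of_forall hflux)).congr_deriv ?_
  rw [hflux]
  rcases n with _ | n
  · simp
  · simp only [Nat.add_sub_cancel]
    field_simp
    ring

lemma hasDerivAt_radialFlux (hh : Continuous h) (t : ℝ) :
    HasDerivAt (radialFlux n h) (n * weightedMean n h t - h t) t := by
  have hD : Continuous fun t => n * weightedMean n h t - h t := by
    have := continuous_weightedMean (n := n) hh
    fun_prop
  refine hasDerivAt_of_hasDerivAt_of_ne' (x := 0) (fun y hy => ?_)
    (continuous_radialFlux hh).continuousAt hD.continuousAt t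
  refine (hasDerivAt_radialFlux_of_ne hh hy).congr_deriv ?_
  rw [radialFlux_eq_neg_mul_weightedMean]
  field_simp
  ring

lemma contDiff_radialFlux (hh : Continuous h) : ContDiff ℝ 1 (radialFlux n h) := by
  refine contDiff_one_iff_deriv.2 ⟨fun t => (hasDerivAt_radialFlux hh t).differentiableAt, ?_⟩
  rw [show deriv (radialFlux n h) = _ from funext fun t => (hasDerivAt_radialFlux hh t).deriv]
  have := continuous_weightedMean (n := n) hh
  fun_prop

end radialFlux

noncomputable def radialPicard (n : ℕ) (ζ : ℝ) (h : ℝ → ℝ) (r : ℝ) : ℝ :=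
  ζ + ∫ t in (0:ℝ)..r, phiDerivInv (radialFlux n h t)

section radialPicard

variable {n : ℕ} {ζ : ℝ} {h h₁ h₂ : ℝ → ℝ}

lemma radialPicard_zero (n : ℕ) (ζ : ℝ) (h : ℝ → ℝ) : radialPicard n ζ h 0 = ζ := by
  simp [radialPicard]

lemma continuous_phiDerivInv_radialFlux (hh : Continuous h) :
    Continuous fun t => phiDerivInv (radialFlux n h t) :=
  lipschitzWith_phiDerivInv.continuous.comp (continuous_radialFlux hh)

lemma hasDerivAt_radialPicard (hh : Continuous h) (r : ℝ) :
    HasDerivAt (radialPicard n ζ h) (phiDerivInv (radialFlux n h r)) r :=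
  ((continuous_phiDerivInv_radialFlux hh).integral_hasStrictDerivAt 0 r).hasDerivAt.const_add ζ

lemma contDiff_radialPicard (hh : Continuous h) : ContDiff ℝ 2 (radialPicard n ζ h) := by
  refine (contDiff_succ_iff_deriv (n := 1)).2
    ⟨fun r => (hasDerivAt_radialPicard hh r).differentiableAt, by simp, ?_⟩
  rw [show deriv (radialPicard n ζ h) = _ from
    funext fun r => (hasDerivAt_radialPicard hh r).deriv]
  exact contDiff_phiDerivInv.comp (contDiff_radialFlux hh)

lemma radialPicard_congr {r : ℝ} (hr : 0 ≤ r) (h₁₂ : EqOn h₁ h₂ (Icc 0 r)) :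
    radialPicard n ζ h₁ r = radialPicard n ζ h₂ r := by
  rw [radialPicard, radialPicard, integral_congr fun t ht => ?_]
  rw [uIcc_of_le hr] at ht
  rw [radialFlux_congr ht.1 (h₁₂.mono (Icc_subset_Icc_right ht.2))]

lemma abs_radialPicard_sub_le (n : ℕ) (ζ : ℝ) (h : ℝ → ℝ) {r : ℝ} (hr : 0 ≤ r) :
    |radialPicard n ζ h r - ζ| ≤ r := by
  have hbound : ∀ t ∈ Ι (0:ℝ) r, ‖phiDerivInv (radialFlux n h t)‖ ≤ 1 :=
    fun t _ => (abs_phiDerivInv_lt_one _).le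
  simpa [radialPicard, abs_of_nonneg hr] using norm_integral_le_of_norm_le_const hbound

lemma abs_radialPicard_sub_radialPicard_le (hh₁ : Continuous h₁) (hh₂ : Continuous h₂)
    {r η : ℝ} (hr : 0 ≤ r) (hη : ∀ s ∈ Icc 0 r, |h₁ s - h₂ s| ≤ η) :
    |radialPicard n ζ h₁ r - radialPicard n ζ h₂ r| ≤ η * r ^ 2 := by
  have hbound : ∀ t ∈ Ι (0:ℝ) r,
      ‖phiDerivInv (radialFlux n h₁ t) - phiDerivInv (radialFlux n h₂ t)‖ ≤ η * r := by
    intro t ht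
    rw [uIoc_of_le hr] at ht
    have hη₀ : 0 ≤ η := (abs_nonneg _).trans (hη 0 ⟨le_rfl, hr⟩)
    calc ‖phiDerivInv (radialFlux n h₁ t) - phiDerivInv (radialFlux n h₂ t)‖
        ≤ |radialFlux n h₁ t - radialFlux n h₂ t| := abs_phiDerivInv_sub_le _ _
      _ ≤ η * t := abs_radialFlux_sub_le hh₁ hh₂ ht.1.le
          fun s hs => hη s ⟨hs.1, hs.2.trans ht.2⟩
      _ ≤ η * r := mul_le_mul_of_nonneg_left ht.2 hη₀
  rw [radialPicard, radialPicard, add_sub_add_left_eq_sub, ← integral_sub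
    ((continuous_phiDerivInv_radialFlux hh₁).intervalIntegrable _ _)
    ((continuous_phiDerivInv_radialFlux hh₂).intervalIntegrable _ _)]
  simpa [abs_of_nonneg hr, sq, mul_assoc] using norm_integral_le_of_norm_le_const hbound

end radialPicard

theorem exists_unique_fixedPoint_on_Icc_of_contraction {a b q : ℝ} (hab : a ≤ b) (hq : q < 1)
    (Φ : (ℝ → ℝ) → ℝ → ℝ)
    (hcont : ∀ v, Continuous v → ContinuousOn (Φ v) (Icc a b))
    (hloc : ∀ v w, EqOn v w (Icc a b) → EqOn (Φ v) (Φ w) (Icc a b))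
    (hlip : ∀ v w, Continuous v → Continuous w → ∀ d,
      (∀ s ∈ Icc a b, |v s - w s| ≤ d) →
      ∀ r ∈ Icc a b, |Φ v r - Φ w r| ≤ q * d) :
    ∃ u, Continuous u ∧ EqOn (Φ u) u (Icc a b) ∧
      ∀ v, ContinuousOn v (Icc a b) → EqOn (Φ v) v (Icc a b) → EqOn v u (Icc a b) := by
  let ext : C(Icc a b, ℝ) → ℝ → ℝ := fun u => IccExtend hab u
  have hext (u : C(Icc a b, ℝ)) : Continuous (ext u) := u.continuous.Icc_extend'
  have hext_apply (u : C(Icc a b, ℝ)) {r : ℝ} (hr : r ∈ Icc a b) : ext u r = u ⟨r, hr⟩ :=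
    IccExtend_of_mem hab u hr
  let T : C(Icc a b, ℝ) → C(Icc a b, ℝ) := fun u =>
    ⟨(Icc a b).domRestrict (Φ (ext u)), (hcont _ (hext u)).domRestrict⟩
  have hT : ContractingWith q.toNNReal T := by
    refine ⟨Real.toNNReal_lt_one.2 hq, LipschitzWith.of_dist_le_mul fun u v => ?_⟩
    refine (ContinuousMap.dist_le (by positivity)).2 fun x => ?_
    have huv : ∀ s ∈ Icc a b, |ext u s - ext v s| ≤ dist u v := fun s hs => by
      simpa [hext_apply _ hs, Real.dist_eq] using u.dist_apply_le_dist (g := v) ⟨s, hs⟩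
    rw [Real.dist_eq]
    exact (hlip _ _ (hext u) (hext v) _ huv x x.2).trans
      (mul_le_mul_of_nonneg_right (Real.le_coe_toNNReal q) dist_nonneg)
  set p := hT.fixedPoint
  refine ⟨ext p, hext p, fun r hr => ?_, fun v hv hfix r hr => ?_⟩
  · rw [hext_apply p hr]
    exact congrArg (· ⟨r, hr⟩) hT.fixedPoint_isFixedPt
  · let v' : C(Icc a b, ℝ) := ⟨(Icc a b).domRestrict v, hv.domRestrict⟩
    have hv' : EqOn (ext v') v (Icc a b) := fun s hs => hext_apply v' hs
    have hTv' : T v' = v' := ContinuousMap.ext fun x => (hloc _ _ hv' x.2).trans (hfix x.2)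
    rw [hext_apply p hr, ← show v' = p from hT.fixedPoint_unique hTv']
    rfl

theorem exists_unique_radialPicard_fixedPoint (n : ℕ) (ζ : ℝ) {F : ℝ → ℝ}
    (hF : LocallyLipschitz F) :
    ∃ δ > (0:ℝ), ∃ ε > (0:ℝ), ∃ u : ℝ → ℝ, Continuous u ∧
      (∀ r ∈ Icc 0 δ, |u r - ζ| ≤ ε ∧ u r = radialPicard n ζ (F ∘ u) r) ∧
      ∀ v : ℝ → ℝ, ContinuousOn v (Icc 0 δ) → (∀ r ∈ Icc 0 δ, |v r - ζ| ≤ ε) →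
        (∀ r ∈ Icc 0 δ, v r = radialPicard n ζ (F ∘ v) r) → EqOn v u (Icc 0 δ) := by
  obtain ⟨K, s, hs, hKs⟩ := hF ζ
  obtain ⟨ε, hε, hball⟩ := Metric.nhds_basis_closedBall.mem_iff.1 hs
  obtain ⟨G, hG, hFG⟩ := (hKs.mono hball).extend_real
  set δ := min ε (1 / (K + 1))
  have hδ : 0 < δ := lt_min hε (by positivity)
  have hδε : δ ≤ ε := min_le_left _ _
  have hq : K * δ ^ 2 < 1 := by
    have : δ * (K + 1) ≤ 1 := (le_div_iff₀ (by positivity)).1 (min_le_right _ _)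
    nlinarith [K.coe_nonneg]
  have hFG_eq : ∀ v : ℝ → ℝ, (∀ r ∈ Icc 0 δ, |v r - ζ| ≤ ε) →
      ∀ r ∈ Icc 0 δ, radialPicard n ζ (G ∘ v) r = radialPicard n ζ (F ∘ v) r :=
    fun v hv r hr => radialPicard_congr hr.1 fun s hs =>
      (hFG (Metric.mem_closedBall.2 (hv s ⟨hs.1, hs.2.trans hr.2⟩))).symm
  have hcontract : ∀ v w : ℝ → ℝ, Continuous v → Continuous w → ∀ d,
      (∀ s ∈ Icc 0 δ, |v s - w s| ≤ d) → ∀ r ∈ Icc 0 δ,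
        |radialPicard n ζ (G ∘ v) r - radialPicard n ζ (G ∘ w) r| ≤ K * δ ^ 2 * d := by
    rintro v w hv hw d hd r ⟨hr₀, hrδ⟩
    have hd₀ : 0 ≤ d := (abs_nonneg _).trans (hd 0 (left_mem_Icc.2 hδ.le))
    have hGvw : ∀ s ∈ Icc 0 r, |(G ∘ v) s - (G ∘ w) s| ≤ K * d := fun s hs => by
      have hlip := hG.dist_le_mul (v s) (w s)
      rw [Real.dist_eq, Real.dist_eq] at hlip
      exact hlip.trans (mul_le_mul_of_nonneg_left (hd s ⟨hs.1, hs.2.trans hrδ⟩) K.coe_nonneg)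
    calc |radialPicard n ζ (G ∘ v) r - radialPicard n ζ (G ∘ w) r| ≤ K * d * r ^ 2 :=
          abs_radialPicard_sub_radialPicard_le (hG.continuous.comp hv) (hG.continuous.comp hw)
            hr₀ hGvw
      _ ≤ K * d * δ ^ 2 := by gcongr
      _ = K * δ ^ 2 * d := by ring
  obtain ⟨u, hu, hfix, huniq⟩ := exists_unique_fixedPoint_on_Icc_of_contraction hδ.le hq
    (fun v => radialPicard n ζ (G ∘ v))
    (fun v hv => (contDiff_radialPicard (hG.continuous.comp hv)).continuous.continuousOn)
    (fun v w hvw r hr => radialPicard_congr hr.1 fun s hs =>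
      congrArg G (hvw ⟨hs.1, hs.2.trans hr.2⟩))
    hcontract
  have hu_ball : ∀ r ∈ Icc 0 δ, |u r - ζ| ≤ ε := fun r hr => by
    rw [← hfix hr]
    exact (abs_radialPicard_sub_le n ζ _ hr.1).trans (hr.2.trans hδε)
  refine ⟨δ, hδ, ε, hε, u, hu, fun r hr => ⟨hu_ball r hr, ?_⟩,
    fun v hv hv_ball hv_fix => ?_⟩
  · rw [← hFG_eq u hu_ball r hr]
    exact (hfix hr).symm
  · exact huniq v hv fun r hr => (hFG_eq v hv_ball r hr).trans (hv_fix r hr).symm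

theorem local_existence_singular_ivp_general
    (N : ℕ) (hN : 2 ≤ N) (lam : ℝ) (ζ : ℝ)
    (f : ℝ → ℝ) (hfLip : LocallyLipschitz f) :
    ∃ δ > (0:ℝ), ∃ u u' : ℝ → ℝ,
      ContDiffOn ℝ 2 u (Set.Icc 0 δ) ∧
      (∀ r ∈ Set.Icc (0:ℝ) δ, HasDerivWithinAt u (u' r) (Set.Icc 0 δ) r) ∧
      u 0 = ζ ∧ u' 0 = 0 ∧
      (∀ r ∈ Set.Icc (0:ℝ) δ, |u' r| < 1) ∧
      (∀ r ∈ Set.Ioc (0:ℝ) δ,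
        HasDerivWithinAt (fun s => u' s / Real.sqrt (1 - (u' s) ^ 2))
          (-(((N : ℝ) - 1) / r * (u' r / Real.sqrt (1 - (u' r) ^ 2)) + lam * f (u r)))
          (Set.Icc 0 δ) r) ∧
      (∀ r ∈ Set.Icc (0:ℝ) δ,
        u r = ζ + ∫ t in (0:ℝ)..r,
          (fun y => y / Real.sqrt (1 + y ^ 2))
            (-(1 / t ^ (N - 1)) * ∫ s in (0:ℝ)..t, s ^ (N - 1) * (lam * f (u s)))) ∧
      -- uniqueness of the fixed point in a closed ball of `C([0,δ])` centered at `ζ`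
      ∃ ε > (0:ℝ),
        (∀ r ∈ Set.Icc (0:ℝ) δ, |u r - ζ| ≤ ε) ∧
        ∀ v : ℝ → ℝ, ContinuousOn v (Set.Icc 0 δ) →
          (∀ r ∈ Set.Icc (0:ℝ) δ, |v r - ζ| ≤ ε) →
          (∀ r ∈ Set.Icc (0:ℝ) δ,
            v r = ζ + ∫ t in (0:ℝ)..r,
              (fun y => y / Real.sqrt (1 + y ^ 2))
                (-(1 / t ^ (N - 1)) * ∫ s in (0:ℝ)..t, s ^ (N - 1) * (lam * f (v s)))) →
          ∀ r ∈ Set.Icc (0:ℝ) δ, v r = u r := by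
  have hF : LocallyLipschitz fun x => lam * f x :=
    (lipschitzWith_smul lam).locallyLipschitz.comp hfLip
  obtain ⟨δ, hδ, ε, hε, u, hu, hfix, huniq⟩ :=
    exists_unique_radialPicard_fixedPoint (N - 1) ζ hF
  set h : ℝ → ℝ := fun s => lam * f (u s)
  have hh : Continuous h := hF.continuous.comp hu
  have hU : EqOn u (radialPicard (N - 1) ζ h) (Icc 0 δ) := fun r hr => (hfix r hr).2
  have hN₁ : (N : ℝ) - 1 = (N - 1 : ℕ) := by rw [Nat.cast_sub (by omega), Nat.cast_one]
  refine ⟨δ, hδ, u, fun r => phiDerivInv (radialFlux (N - 1) h r),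
    (contDiff_radialPicard hh).contDiffOn.congr hU,
    fun r hr => (hasDerivAt_radialPicard hh r).hasDerivWithinAt.congr hU (hU hr),
    (hU (left_mem_Icc.2 hδ.le)).trans (radialPicard_zero _ _ _),
    by simp only [radialFlux_zero, phiDerivInv_zero], fun r _ => abs_phiDerivInv_lt_one _,
    fun r hr => ?_, hU, ε, hε, fun r hr => (hfix r hr).1, huniq⟩
  simp only [phiDerivInv_div_sqrt, hN₁]
  exact (hasDerivAt_radialFlux_of_ne hh hr.1.ne').hasDerivWithinAt

/-- local existence for the singular IVP: there is `δ > 0` and a `C²`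
solution `u` on `[0,δ]` of the radial IVP, which satisfies (and is, in a closed ball of
`C([0,δ])` around the constant `ζ`, the unique solution of) the fixed point equation
`u(r) = ζ + ∫₀^r (φ')⁻¹(-(1/t^{N-1}) ∫₀^t s^{N-1} λ f(u(s)) ds) dt`,
where `(φ')⁻¹(y) = y/√(1+y²)`. -/
theorem local_existence_singular_ivp
    (N : ℕ) (hN : 2 ≤ N) (lam : ℝ) (hlam : 0 < lam) (ζ : ℝ)
    (f : ℝ → ℝ) (hfLip : LocallyLipschitz f) :
    ∃ δ > (0:ℝ), ∃ u u' : ℝ → ℝ,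
      ContDiffOn ℝ 2 u (Set.Icc 0 δ) ∧
      (∀ r ∈ Set.Icc (0:ℝ) δ, HasDerivWithinAt u (u' r) (Set.Icc 0 δ) r) ∧
      u 0 = ζ ∧ u' 0 = 0 ∧
      (∀ r ∈ Set.Icc (0:ℝ) δ, |u' r| < 1) ∧
      (∀ r ∈ Set.Ioc (0:ℝ) δ,
        HasDerivWithinAt (fun s => u' s / Real.sqrt (1 - (u' s) ^ 2))
          (-(((N : ℝ) - 1) / r * (u' r / Real.sqrt (1 - (u' r) ^ 2)) + lam * f (u r)))
          (Set.Icc 0 δ) r) ∧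
      (∀ r ∈ Set.Icc (0:ℝ) δ,
        u r = ζ + ∫ t in (0:ℝ)..r,
          (fun y => y / Real.sqrt (1 + y ^ 2))
            (-(1 / t ^ (N - 1)) * ∫ s in (0:ℝ)..t, s ^ (N - 1) * (lam * f (u s)))) ∧
      -- uniqueness of the fixed point in a closed ball of `C([0,δ])` centered at `ζ`
      ∃ ε > (0:ℝ),
        (∀ r ∈ Set.Icc (0:ℝ) δ, |u r - ζ| ≤ ε) ∧
        ∀ v : ℝ → ℝ, ContinuousOn v (Set.Icc 0 δ) →
          (∀ r ∈ Set.Icc (0:ℝ) δ, |v r - ζ| ≤ ε) →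
          (∀ r ∈ Set.Icc (0:ℝ) δ,
            v r = ζ + ∫ t in (0:ℝ)..r,
              (fun y => y / Real.sqrt (1 + y ^ 2))
                (-(1 / t ^ (N - 1)) * ∫ s in (0:ℝ)..t, s ^ (N - 1) * (lam * f (v s)))) →
          ∀ r ∈ Set.Icc (0:ℝ) δ, v r = u r :=
  local_existence_singular_ivp_general N hN lam ζ f hfLip
end

section
/- (Initial decrease.) Let N ≥ 2, λ > 0, ζ > 0, δ > 0, and let f : ℝ → ℝ be continuous with f(ζ) > 0. Let u ∈ C²([0,δ]) satisfy u(0) = ζ, u'(0) = 0, |u'(r)| < 1, and (u'(r)/√(1−u'(r)²))' + ((N−1)/r)·u'(r)/√(1−u'(r)²) + λ·f(u(r)) = 0 for r ∈ (0,δ]. Then u''(0) = −λ f(ζ)/N < 0, and there exists σ ∈ (0,δ] such that u'(r) < 0 and 0 < u(r) < ζ for all r ∈ (0,σ). -/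
open Set Filter Topology

/-!
With `w = u' / √(1 - u'²)`, the equation reads `w' + ((N - 1) / r) w + λ f(u) = 0`. Since
`w(0) = 0` and `w'(0) = u''(0)`, the singular term `((N - 1) / r) w` tends to `(N - 1) u''(0)`,
so letting `r → 0⁺` in the equation gives `N u''(0) = -λ f(ζ) < 0`. Then `u'(r) / r → u''(0)`
makes `u'` negative just right of `0`, so `u` decreases from `ζ` there while staying positive
by continuity.
-/

theorem tendsto_div_nhdsGT_of_hasDerivWithinAt {φ : ℝ → ℝ} {a : ℝ} (hφ0 : φ 0 = 0)
    (hφ : HasDerivWithinAt φ a (Ici 0) 0) : Tendsto (fun r => φ r / r) (𝓝[>] 0) (𝓝 a) := by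
  have h := (hasDerivWithinAt_iff_tendsto_slope' self_notMem_Ioi).mp hφ.Ioi_of_Ici
  exact h.congr fun r => by rw [slope_def_field, hφ0, sub_zero, sub_zero]

theorem eventually_neg_of_hasDerivWithinAt_neg {φ : ℝ → ℝ} {a : ℝ} (hφ0 : φ 0 = 0)
    (hφ : HasDerivWithinAt φ a (Ici 0) 0) (ha : a < 0) : ∀ᶠ r in 𝓝[>] 0, φ r < 0 := by
  filter_upwards [(tendsto_div_nhdsGT_of_hasDerivWithinAt hφ0 hφ).eventually (gt_mem_nhds ha),
    self_mem_nhdsWithin] with r hr hr0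
  exact neg_of_div_neg_left hr (le_of_lt hr0)

/-- Since `w r / r → a`, the equation gives `w' → -(c a + b)` at `0⁺`, and a one-sided limit of
`w'` is the one-sided derivative `a`. -/
theorem add_one_mul_deriv_eq_of_singular_ode {w g : ℝ → ℝ} {δ a b c : ℝ} (hδ : 0 < δ)
    (hw0 : w 0 = 0) (hw'0 : HasDerivWithinAt w a (Ici 0) 0)
    (hw' : ∀ r ∈ Ioo 0 δ, HasDerivAt w (-(c / r * w r + g r)) r)
    (hg : Tendsto g (𝓝[>] 0) (𝓝 b)) : (c + 1) * a = -b := by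
  have hlim : Tendsto (deriv w) (𝓝[>] 0) (𝓝 (-(c * a + b))) := by
    have h := ((tendsto_div_nhdsGT_of_hasDerivWithinAt hw0 hw'0).const_mul c).add hg
    refine h.neg.congr' ?_
    filter_upwards [Ioo_mem_nhdsGT hδ] with r hr
    rw [(hw' r hr).deriv, mul_div_assoc']
    ring
  have hw'0' : HasDerivWithinAt w (-(c * a + b)) (Ici 0) 0 :=
    hasDerivWithinAt_Ici_of_tendsto_deriv
      (fun r hr => (hw' r hr).differentiableAt.differentiableWithinAt)
      (hw'0.continuousWithinAt.mono (Ioo_subset_Ioi_self.trans Ioi_subset_Ici_self))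
      (Ioo_mem_nhdsGT hδ) hlim
  have ha : a = -(c * a + b) := (uniqueDiffWithinAt_Ici 0).eq_deriv _ hw'0 hw'0'
  linarith

theorem exists_Ioc_forall_Ioo_of_eventually_nhdsGT {P : ℝ → Prop} {a δ : ℝ} (hδ : a < δ)
    (h : ∀ᶠ r in 𝓝[>] a, P r) : ∃ σ ∈ Ioc a δ, ∀ r ∈ Ioo a σ, P r := by
  obtain ⟨ε, hε, hsub⟩ := mem_nhdsGT_iff_exists_Ioo_subset.mp h
  exact ⟨min ε δ, ⟨lt_min hε hδ, min_le_right _ _⟩,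
    fun r hr => hsub ⟨hr.1, hr.2.trans_le (min_le_left _ _)⟩⟩

theorem strictAntiOn_Icc_of_hasDerivWithinAt_neg {u u' : ℝ → ℝ} {a b : ℝ}
    (hu : ∀ r ∈ Icc a b, HasDerivWithinAt u (u' r) (Icc a b) r)
    (hneg : ∀ r ∈ Ioo a b, u' r < 0) : StrictAntiOn u (Icc a b) := by
  refine strictAntiOn_of_hasDerivWithinAt_neg (f' := u') (convex_Icc a b)
    (fun r hr => (hu r hr).continuousWithinAt) ?_ ?_ <;> rw [interior_Icc]
  · exact fun r hr => (hu r (Ioo_subset_Icc_self hr)).mono Ioo_subset_Icc_self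
  · exact hneg

theorem hasDerivAt_div_sqrt_one_sub_sq_zero :
    HasDerivAt (fun t : ℝ => t / √(1 - t ^ 2)) 1 0 := by
  have hsqrt : HasDerivAt (fun t : ℝ => √(1 - t ^ 2)) 0 0 := by
    simpa using ((hasDerivAt_pow 2 (0:ℝ)).const_sub 1).sqrt (by norm_num)
  exact ((hasDerivAt_id (0:ℝ)).div hsqrt (by norm_num)).congr_deriv (by simp)

theorem initial_decrease_general
    (N : ℕ) (hN : 2 ≤ N) (lam : ℝ) (hlam : 0 < lam) (ζ : ℝ) (hζ : 0 < ζ)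
    (δ : ℝ) (hδ : 0 < δ)
    (f : ℝ → ℝ) (hf : Continuous f) (hfζ : 0 < f ζ)
    (u u' u'' : ℝ → ℝ)
    (hu' : ∀ r ∈ Set.Icc (0:ℝ) δ, HasDerivWithinAt u (u' r) (Set.Icc 0 δ) r)
    (hu'' : ∀ r ∈ Set.Icc (0:ℝ) δ, HasDerivWithinAt u' (u'' r) (Set.Icc 0 δ) r)
    (hu0 : u 0 = ζ) (hu'0 : u' 0 = 0)
    (hode : ∀ r ∈ Set.Ioc (0:ℝ) δ,
      HasDerivWithinAt (fun s => u' s / Real.sqrt (1 - (u' s) ^ 2))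
        (-(((N : ℝ) - 1) / r * (u' r / Real.sqrt (1 - (u' r) ^ 2)) + lam * f (u r)))
        (Set.Icc 0 δ) r) :
    u'' 0 = -lam * f ζ / N ∧ u'' 0 < 0 ∧
    ∃ σ ∈ Set.Ioc (0:ℝ) δ, ∀ r ∈ Set.Ioo (0:ℝ) σ, u' r < 0 ∧ 0 < u r ∧ u r < ζ := by
  have h0 : (0:ℝ) ∈ Icc 0 δ := left_mem_Icc.2 hδ.le
  have hIcc : Icc 0 δ ∈ 𝓝[≥] (0:ℝ) := Icc_mem_nhdsGE hδ
  have hNpos : (0:ℝ) < N := Nat.cast_pos.2 (by omega)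
  have hw'0 : HasDerivWithinAt (fun s => u' s / √(1 - u' s ^ 2)) (u'' 0) (Ici 0) 0 := by
    have h := (hu'0 ▸ hasDerivAt_div_sqrt_one_sub_sq_zero).comp_hasDerivWithinAt 0 (hu'' 0 h0)
    exact (h.congr_deriv (one_mul _)).mono_of_mem_nhdsWithin hIcc
  have hu_lim : Tendsto u (𝓝[>] 0) (𝓝 ζ) :=
    hu0 ▸ ((hu' 0 h0).continuousWithinAt.mono_of_mem_nhdsWithin hIcc).mono Ioi_subset_Ici_self
  have hNu'' : (N:ℝ) * u'' 0 = -(lam * f ζ) := by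
    simpa using add_one_mul_deriv_eq_of_singular_ode hδ (by simp [hu'0]) hw'0
      (fun r hr => (hode r ⟨hr.1, hr.2.le⟩).hasDerivAt (Icc_mem_nhds hr.1 hr.2))
      (((hf.tendsto ζ).comp hu_lim).const_mul lam)
  have hval : u'' 0 = -lam * f ζ / N := by
    field_simp
    linarith
  have hneg : u'' 0 < 0 := by
    rw [hval]
    exact div_neg_of_neg_of_pos (by nlinarith) hNpos
  obtain ⟨σ, hσ, hσP⟩ := exists_Ioc_forall_Ioo_of_eventually_nhdsGT hδ
    ((eventually_neg_of_hasDerivWithinAt_neg hu'0 ((hu'' 0 h0).mono_of_mem_nhdsWithin hIcc)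
      hneg).and (hu_lim.eventually (lt_mem_nhds hζ)))
  have hanti : StrictAntiOn u (Icc 0 σ) := strictAntiOn_Icc_of_hasDerivWithinAt_neg
    (fun r hr => (hu' r ⟨hr.1, hr.2.trans hσ.2⟩).mono (Icc_subset_Icc_right hσ.2))
    (fun r hr => (hσP r hr).1)
  refine ⟨hval, hneg, σ, hσ, fun r hr => ⟨(hσP r hr).1, (hσP r hr).2, ?_⟩⟩
  exact hu0 ▸ hanti (left_mem_Icc.2 hσ.1.le) (Ioo_subset_Icc_self hr) hr.1

/-- initial decrease: if `f(ζ) > 0` then the solution of the radial IVP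
satisfies `u''(0) = -λ f(ζ)/N < 0`, and `u' < 0`, `0 < u < ζ` just to the right of `0`. -/
theorem initial_decrease
    (N : ℕ) (hN : 2 ≤ N) (lam : ℝ) (hlam : 0 < lam) (ζ : ℝ) (hζ : 0 < ζ)
    (δ : ℝ) (hδ : 0 < δ)
    (f : ℝ → ℝ) (hf : Continuous f) (hfζ : 0 < f ζ)
    (u u' u'' : ℝ → ℝ)
    (hu : ContDiffOn ℝ 2 u (Set.Icc 0 δ))
    (hu' : ∀ r ∈ Set.Icc (0:ℝ) δ, HasDerivWithinAt u (u' r) (Set.Icc 0 δ) r)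
    (hu'' : ∀ r ∈ Set.Icc (0:ℝ) δ, HasDerivWithinAt u' (u'' r) (Set.Icc 0 δ) r)
    (hu0 : u 0 = ζ) (hu'0 : u' 0 = 0)
    (hu'bd : ∀ r ∈ Set.Icc (0:ℝ) δ, |u' r| < 1)
    (hode : ∀ r ∈ Set.Ioc (0:ℝ) δ,
      HasDerivWithinAt (fun s => u' s / Real.sqrt (1 - (u' s) ^ 2))
        (-(((N : ℝ) - 1) / r * (u' r / Real.sqrt (1 - (u' r) ^ 2)) + lam * f (u r)))
        (Set.Icc 0 δ) r) :
    u'' 0 = -lam * f ζ / N ∧ u'' 0 < 0 ∧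
    ∃ σ ∈ Set.Ioc (0:ℝ) δ, ∀ r ∈ Set.Ioo (0:ℝ) σ, u' r < 0 ∧ 0 < u r ∧ u r < ζ :=
  initial_decrease_general N hN lam hlam ζ hζ δ hδ f hf hfζ u u' u'' hu' hu'' hu0 hu'0 hode
end

section
/- (Gradient bound, cf. (11).) Let N ≥ 2, λ > 0, ζ ∈ ℝ, R > 0, m ∈ ℝ, and let f : ℝ → ℝ be continuous with F(u) := ∫₀ᵘ f(s) ds. Let u ∈ C²([0,R)) satisfy |u'(r)| < 1, u(0) = ζ, u'(0) = 0, the radial equation (u'(r)/√(1−u'(r)²))' + ((N−1)/r)·u'(r)/√(1−u'(r)²) + λ·f(u(r)) = 0 on (0,R), and suppose F(u(r)) ≥ m for all r ∈ [0,R). Then, with C := λ·(F(ζ) − m) ≥ 0, one has H(u'(r)) ≤ C for all r ∈ [0,R), where H(t) := (1−√(1−t²))/√(1−t²); consequently u'(r)² ≤ 1 − 1/(1+C)² for all r ∈ [0,R), i.e. sup_{[0,R)} |u'| ≤ 1 − ε for some ε > 0 depending only on C. -/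
/-!
Along a radial solution the relativistic energy `1 / √(1 - u'²) + λ F(u)` is nonincreasing:
writing `w = u' / √(1 - u'²)`, it equals `√(1 + w²) + λ F(u)`, whose derivative is
`u' (w' + λ f(u)) = -((N - 1) / r) u' w ≤ 0`. Comparing with its value `1 + λ F(ζ)` at the
origin and using `F(u) ≥ m` gives `H(u') = 1 / √(1 - u'²) - 1 ≤ λ (F(ζ) - m)`.
-/

open Set Topology Real

namespace Real

theorem sqrt_one_add_sq_div_sqrt_one_sub_sq {t : ℝ} (ht : t ^ 2 < 1) :
    √(1 + (t / √(1 - t ^ 2)) ^ 2) = 1 / √(1 - t ^ 2) := by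
  have hs : 0 < √(1 - t ^ 2) := sqrt_pos.2 (by linarith)
  rw [← sqrt_sq (one_div_pos.2 hs).le]
  congr 1
  field_simp
  rw [sq_sqrt (by linarith)]
  ring

theorem div_sqrt_one_sub_sq_div_sqrt_one_add_sq {t : ℝ} (ht : t ^ 2 < 1) :
    t / √(1 - t ^ 2) / √(1 + (t / √(1 - t ^ 2)) ^ 2) = t := by
  have hs : 0 < √(1 - t ^ 2) := sqrt_pos.2 (by linarith)
  rw [sqrt_one_add_sq_div_sqrt_one_sub_sq ht]
  field_simp

theorem hasDerivAt_sqrt_one_add_sq (x : ℝ) :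
    HasDerivAt (fun y => √(1 + y ^ 2)) (x / √(1 + x ^ 2)) x := by
  convert ((hasDerivAt_pow 2 x).const_add 1).sqrt (by positivity) using 1
  field_simp
  ring

theorem sq_le_one_sub_one_div_sq_of_one_sub_sqrt_div_sqrt_le {t C : ℝ} (ht : t ^ 2 < 1)
    (h : (1 - √(1 - t ^ 2)) / √(1 - t ^ 2) ≤ C) : t ^ 2 ≤ 1 - 1 / (1 + C) ^ 2 := by
  have hs : 0 < √(1 - t ^ 2) := sqrt_pos.2 (by linarith)
  rw [sub_div, div_self hs.ne', sub_le_iff_le_add', div_le_iff₀ hs] at h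
  have hC : 0 < 1 + C := pos_of_mul_pos_left (one_pos.trans_le h) hs.le
  have h2 : 1 / (1 + C) ^ 2 ≤ √(1 - t ^ 2) ^ 2 := by
    rw [← one_div_pow]
    exact pow_le_pow_left₀ (by positivity) ((div_le_iff₀' hC).2 h) 2
  rw [sq_sqrt (by linarith)] at h2
  linarith

theorem exists_pos_forall_sq_le_one_sub_abs_le {δ : ℝ} (hδ : 0 < δ) :
    ∃ ε > 0, ∀ t : ℝ, t ^ 2 ≤ 1 - δ → |t| ≤ 1 - ε := by
  refine ⟨1 - √(1 - δ), ?_, fun t ht => ?_⟩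
  · have : √(1 - δ) < 1 := (sqrt_lt' one_pos).2 (by linarith)
    linarith
  · have := sqrt_le_sqrt ht
    rw [sqrt_sq_eq_abs] at this
    linarith

end Real

theorem ContDiffOn.continuousOn_of_hasDerivWithinAt {f f' : ℝ → ℝ} {s : Set ℝ}
    (hf : ContDiffOn ℝ 1 f s) (hs : UniqueDiffOn ℝ s)
    (hf' : ∀ x ∈ s, HasDerivWithinAt f (f' x) s x) : ContinuousOn f' s :=
  (hf.continuousOn_derivWithin hs le_rfl).congr fun x hx => ((hf' x hx).derivWithin (hs x hx)).symm

section RadialEnergy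

variable {k lam R : ℝ} {f F u u' : ℝ → ℝ}

theorem hasDerivAt_radial_energy (hF : ∀ x, HasDerivAt F (f x) x)
    (hu : ∀ r ∈ Ico 0 R, HasDerivWithinAt u (u' r) (Ico 0 R) r)
    (hbd : ∀ r ∈ Ico 0 R, u' r ^ 2 < 1)
    (hode : ∀ r ∈ Ioo 0 R, HasDerivAt (fun s => u' s / √(1 - u' s ^ 2))
      (-(k / r * (u' r / √(1 - u' r ^ 2)) + lam * f (u r))) r)
    {r : ℝ} (hr : r ∈ Ioo 0 R) :
    HasDerivAt (fun s => 1 / √(1 - u' s ^ 2) + lam * F (u s))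
      (-(k / r * (u' r * (u' r / √(1 - u' r ^ 2))))) r := by
  have hnhds : Ico 0 R ∈ 𝓝 r := Ico_mem_nhds hr.1 hr.2
  have hE := ((hasDerivAt_sqrt_one_add_sq _).comp r (hode r hr)).add
    (((hF (u r)).comp r ((hu r (Ioo_subset_Ico_self hr)).hasDerivAt hnhds)).const_mul lam)
  rw [div_sqrt_one_sub_sq_div_sqrt_one_add_sq (hbd r (Ioo_subset_Ico_self hr))] at hE
  refine (hE.congr_of_eventuallyEq ?_).congr_deriv (by ring)
  filter_upwards [hnhds] with s hs
  simp only [Pi.add_apply, Function.comp_apply, sqrt_one_add_sq_div_sqrt_one_sub_sq (hbd s hs)]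

theorem antitoneOn_radial_energy (hk : 0 ≤ k) (hF : ∀ x, HasDerivAt F (f x) x)
    (hu : ∀ r ∈ Ico 0 R, HasDerivWithinAt u (u' r) (Ico 0 R) r)
    (hu'c : ContinuousOn u' (Ico 0 R))
    (hbd : ∀ r ∈ Ico 0 R, u' r ^ 2 < 1)
    (hode : ∀ r ∈ Ioo 0 R, HasDerivAt (fun s => u' s / √(1 - u' s ^ 2))
      (-(k / r * (u' r / √(1 - u' r ^ 2)) + lam * f (u r))) r) :
    AntitoneOn (fun r => 1 / √(1 - u' r ^ 2) + lam * F (u r)) (Ico 0 R) := by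
  have hFc : Continuous F := continuous_iff_continuousAt.2 fun x => (hF x).continuousAt
  have huc : ContinuousOn u (Ico 0 R) := fun r hr => (hu r hr).continuousWithinAt
  have hsc : ContinuousOn (fun r => √(1 - u' r ^ 2)) (Ico 0 R) :=
    continuous_sqrt.comp_continuousOn (continuousOn_const.sub (hu'c.pow 2))
  refine antitoneOn_of_hasDerivWithinAt_nonpos (convex_Ico 0 R)
    (f' := fun r => -(k / r * (u' r * (u' r / √(1 - u' r ^ 2)))))
    ((continuousOn_const.div hsc fun r hr => (sqrt_pos.2 (sub_pos.2 (hbd r hr))).ne').add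
      (continuousOn_const.mul (hFc.comp_continuousOn huc))) (fun r hr => ?_) (fun r hr => ?_)
  · rw [interior_Ico] at hr ⊢
    exact (hasDerivAt_radial_energy hF hu hbd hode hr).hasDerivWithinAt
  · rw [interior_Ico] at hr
    rw [neg_nonpos, ← mul_div_assoc]
    exact mul_nonneg (div_nonneg hk hr.1.le) (div_nonneg (mul_self_nonneg _) (sqrt_nonneg _))

end RadialEnergy

/-- gradient bound, cf. (11): if `F(u(r)) ≥ m` along a solution on `[0,R)`,
then with `C = λ(F(ζ) - m)` one has `H(u'(r)) ≤ C`, hence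
`u'(r)² ≤ 1 - 1/(1+C)²`, i.e. `|u'| ≤ 1 - ε` for some `ε > 0` depending only on `C`. -/
theorem gradient_bound
    (N : ℕ) (hN : 2 ≤ N) (lam : ℝ) (hlam : 0 < lam) (ζ R m : ℝ) (hR : 0 < R)
    (f : ℝ → ℝ) (hf : Continuous f)
    (u u' : ℝ → ℝ)
    (hu : ContDiffOn ℝ 2 u (Set.Ico 0 R))
    (hu' : ∀ r ∈ Set.Ico (0:ℝ) R, HasDerivWithinAt u (u' r) (Set.Ico 0 R) r)
    (hu'bd : ∀ r ∈ Set.Ico (0:ℝ) R, |u' r| < 1)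
    (hu0 : u 0 = ζ) (hu'0 : u' 0 = 0)
    (hode : ∀ r ∈ Set.Ico (0:ℝ) R, 0 < r →
      HasDerivWithinAt (fun s => u' s / Real.sqrt (1 - (u' s) ^ 2))
        (-(((N : ℝ) - 1) / r * (u' r / Real.sqrt (1 - (u' r) ^ 2)) + lam * f (u r)))
        (Set.Ico 0 R) r)
    (hF : ∀ r ∈ Set.Ico (0:ℝ) R, m ≤ ∫ s in (0:ℝ)..(u r), f s) :
    0 ≤ lam * ((∫ s in (0:ℝ)..ζ, f s) - m) ∧
    (∀ r ∈ Set.Ico (0:ℝ) R,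
      (1 - Real.sqrt (1 - (u' r) ^ 2)) / Real.sqrt (1 - (u' r) ^ 2) ≤
        lam * ((∫ s in (0:ℝ)..ζ, f s) - m)) ∧
    (∀ r ∈ Set.Ico (0:ℝ) R,
      (u' r) ^ 2 ≤ 1 - 1 / (1 + lam * ((∫ s in (0:ℝ)..ζ, f s) - m)) ^ 2) ∧
    ∃ ε > (0:ℝ), ∀ r ∈ Set.Ico (0:ℝ) R, |u' r| ≤ 1 - ε := by
  set F : ℝ → ℝ := fun x => ∫ s in (0:ℝ)..x, f s
  set C := lam * (F ζ - m)
  have h0 : (0 : ℝ) ∈ Ico 0 R := ⟨le_rfl, hR⟩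
  have hbd (r) (hr : r ∈ Ico 0 R) : u' r ^ 2 < 1 := (sq_lt_one_iff_abs_lt_one _).2 (hu'bd r hr)
  have hN1 : (0 : ℝ) ≤ N - 1 := sub_nonneg.2 (by exact_mod_cast one_le_two.trans hN)
  have henergy := antitoneOn_radial_energy hN1
    (fun x => (hf.integral_hasStrictDerivAt 0 x).hasDerivAt) hu'
    ((hu.of_le one_le_two).continuousOn_of_hasDerivWithinAt (uniqueDiffOn_Ico 0 R) hu') hbd
    fun r hr => (hode r (Ioo_subset_Ico_self hr) hr.1).hasDerivAt (Ico_mem_nhds hr.1 hr.2)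
  have hH (r) (hr : r ∈ Ico 0 R) : (1 - √(1 - u' r ^ 2)) / √(1 - u' r ^ 2) ≤ C := by
    have hE := henergy h0 hr hr.1
    simp only [hu'0, hu0, zero_pow two_ne_zero, sub_zero, sqrt_one, div_one] at hE
    rw [sub_div, div_self (sqrt_pos.2 (sub_pos.2 (hbd r hr))).ne']
    linarith [mul_le_mul_of_nonneg_left (hF r hr) hlam.le]
  have hsq (r) (hr : r ∈ Ico 0 R) : u' r ^ 2 ≤ 1 - 1 / (1 + C) ^ 2 :=
    sq_le_one_sub_one_div_sq_of_one_sub_sqrt_div_sqrt_le (hbd r hr) (hH r hr)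
  have hC : 0 ≤ C := mul_nonneg hlam.le (sub_nonneg.2 (hu0 ▸ hF 0 h0))
  obtain ⟨ε, hε, habs⟩ :=
    exists_pos_forall_sq_le_one_sub_abs_le (δ := 1 / (1 + C) ^ 2) (by positivity)
  exact ⟨hC, hH, hsq, ε, hε, fun r hr => habs _ (hsq r hr)⟩
end

section
/- (Logarithmic divergence in dimension 2.) Let λ > 0, ε ∈ (0,1), R₀ > 0, and let f : ℝ → ℝ be continuous. Let u ∈ C²([R₀,∞)) satisfy u'(r) < 0 and |u'(r)| ≤ 1−ε for all r ≥ R₀, f(u(r)) ≥ 0 for all r ≥ R₀, and (r·u'(r)/√(1−u'(r)²))' = −λ·r·f(u(r)) for all r > R₀. Then lim_{r→∞} u(r) = −∞; more precisely, there exist R₁ ≥ R₀ and constants δ > 0, M > 0 such that u(r) ≤ u(R₁) − (δ/M)·ln(r/R₁) for all r > R₁. In particular, no such u can be bounded below. -/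
open Set Filter

/-- logarithmic divergence in dimension 2: a decreasing solution of
`(r φ'(u'))' = -λ r f(u)` on `[R₀,∞)` with `f(u) ≥ 0` and `|u'| ≤ 1-ε` decays at least
logarithmically, hence `u(r) → -∞`. -/
theorem log_divergence_dim_two
    (lam : ℝ) (hlam : 0 < lam) (ε : ℝ) (hε : ε ∈ Set.Ioo (0:ℝ) 1) (R₀ : ℝ) (hR₀ : 0 < R₀)
    (f : ℝ → ℝ) (hf : Continuous f)
    (u u' : ℝ → ℝ)
    (hu : ContDiffOn ℝ 2 u (Set.Ici R₀))
    (hu' : ∀ r ∈ Set.Ici R₀, HasDerivWithinAt u (u' r) (Set.Ici R₀) r)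
    (hu'neg : ∀ r ∈ Set.Ici R₀, u' r < 0)
    (hu'bd : ∀ r ∈ Set.Ici R₀, |u' r| ≤ 1 - ε)
    (hfpos : ∀ r ∈ Set.Ici R₀, 0 ≤ f (u r))
    (hode : ∀ r, R₀ < r →
      HasDerivAt (fun s => s * (u' s / Real.sqrt (1 - (u' s) ^ 2)))
        (-(lam * r * f (u r))) r) :
    Filter.Tendsto u Filter.atTop Filter.atBot ∧
    ∃ R₁ ≥ R₀, ∃ δ > (0:ℝ), ∃ M > (0:ℝ),
      ∀ r, R₁ < r → u r ≤ u R₁ - δ / M * Real.log (r / R₁) := by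
  obtain ⟨hε0, hε1⟩ := hε
  set R₁ : ℝ := R₀ + 1 with hR₁def
  have hR₀R₁ : R₀ < R₁ := by linarith
  have hR₁pos : 0 < R₁ := by linarith
  set g : ℝ → ℝ := fun s => s * (u' s / Real.sqrt (1 - (u' s) ^ 2)) with hgdef
  -- lower bound on 1 - u'^2
  have sqlb : ∀ r ∈ Set.Ici R₀, ε * (2 - ε) ≤ 1 - (u' r) ^ 2 := by
    intro r hr
    have h1 : |u' r| ≤ 1 - ε := hu'bd r hr
    have h2 : (u' r) ^ 2 ≤ (1 - ε) ^ 2 := by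
      have := abs_nonneg (u' r)
      nlinarith [sq_abs (u' r)]
    nlinarith
  have hεpos : 0 < ε * (2 - ε) := by nlinarith
  have sqrtpos : ∀ r ∈ Set.Ici R₀, 0 < Real.sqrt (1 - (u' r) ^ 2) := by
    intro r hr
    exact Real.sqrt_pos.mpr (lt_of_lt_of_le hεpos (sqlb r hr))
  set c : ℝ := Real.sqrt (ε * (2 - ε)) with hcdef
  have hc : 0 < c := Real.sqrt_pos.mpr hεpos
  have sqrtlb : ∀ r ∈ Set.Ici R₀, c ≤ Real.sqrt (1 - (u' r) ^ 2) := by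
    intro r hr
    exact Real.sqrt_le_sqrt (sqlb r hr)
  -- g is antitone on Ici R₁
  have hgant : AntitoneOn g (Set.Ici R₁) := by
    apply antitoneOn_of_deriv_nonpos (convex_Ici R₁)
    · intro r hr
      exact ((hode r (lt_of_lt_of_le hR₀R₁ hr)).continuousAt).continuousWithinAt
    · intro r hr
      rw [interior_Ici] at hr
      exact ((hode r (hR₀R₁.trans hr)).differentiableAt).differentiableWithinAt
    · intro r hr
      rw [interior_Ici] at hr
      have hr' : R₀ < r := hR₀R₁.trans hr
      rw [(hode r hr').deriv]
      have : 0 ≤ lam * r * f (u r) :=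
        mul_nonneg (mul_nonneg hlam.le (by linarith)) (hfpos r (le_of_lt hr'))
      linarith
  set δ₀ : ℝ := -(g R₁) with hδ₀def
  have hδ₀ : 0 < δ₀ := by
    have h1 : u' R₁ < 0 := hu'neg R₁ (le_of_lt hR₀R₁)
    have h2 : 0 < Real.sqrt (1 - (u' R₁) ^ 2) := sqrtpos R₁ (le_of_lt hR₀R₁)
    have : g R₁ < 0 := mul_neg_of_pos_of_neg hR₁pos (div_neg_of_neg_of_pos h1 h2)
    linarith
  set K : ℝ := δ₀ * c with hKdef
  have hK : 0 < K := mul_pos hδ₀ hc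
  -- derivative bound
  have u'bound : ∀ r, R₁ ≤ r → u' r ≤ -(K / r) := by
    intro r hr
    have hr0 : 0 < r := hR₁pos.trans_le hr
    have hrR₀ : r ∈ Set.Ici R₀ := le_of_lt (hR₀R₁.trans_le hr)
    have hg : g r ≤ g R₁ := hgant (Set.self_mem_Ici) hr hr
    have hs := sqrtpos r hrR₀
    have hq : u' r / Real.sqrt (1 - (u' r) ^ 2) ≤ -δ₀ / r := by
      have h0 : r * (u' r / Real.sqrt (1 - (u' r) ^ 2)) ≤ -δ₀ := by
        simpa [hδ₀def] using hg
      rw [div_le_div_iff₀ hs hr0]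
      have hc1 : r * (u' r / Real.sqrt (1 - (u' r) ^ 2)) * Real.sqrt (1 - (u' r) ^ 2)
          = u' r * r := by
        rw [mul_assoc, div_mul_cancel₀ _ (ne_of_gt hs)]; ring
      nlinarith [mul_le_mul_of_nonneg_right h0 hs.le]
    have h1 : u' r / Real.sqrt (1 - (u' r) ^ 2) * Real.sqrt (1 - (u' r) ^ 2) ≤
        (-δ₀ / r) * Real.sqrt (1 - (u' r) ^ 2) :=
      mul_le_mul_of_nonneg_right hq hs.le
    rw [div_mul_cancel₀ _ (ne_of_gt hs)] at h1
    have h2 : (-δ₀ / r) * Real.sqrt (1 - (u' r) ^ 2) ≤ (-δ₀ / r) * c :=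
      mul_le_mul_of_nonpos_left (sqrtlb r hrR₀)
        (div_nonpos_of_nonpos_of_nonneg (by linarith) hr0.le)
    have h3 : (-δ₀ / r) * c = -(K / r) := by
      rw [hKdef]; ring
    linarith [h1, h2, h3.le, h3.ge]
  -- h is antitone
  have huderiv : ∀ r, R₀ < r → HasDerivAt u (u' r) r := by
    intro r hr
    exact (hu' r hr.le).hasDerivAt (Ici_mem_nhds hr)
  set h : ℝ → ℝ := fun s => u s + K * Real.log s with hhdef
  have hhderiv : ∀ r, R₀ < r → HasDerivAt h (u' r + K * r⁻¹) r := by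
    intro r hr
    have hr0 : 0 < r := hR₀.trans hr
    exact (huderiv r hr).add ((Real.hasDerivAt_log (ne_of_gt hr0)).const_mul K)
  have hhant : AntitoneOn h (Set.Ici R₁) := by
    apply antitoneOn_of_deriv_nonpos (convex_Ici R₁)
    · intro r hr
      exact ((hhderiv r (hR₀R₁.trans_le hr)).continuousAt).continuousWithinAt
    · intro r hr
      rw [interior_Ici] at hr
      exact ((hhderiv r (hR₀R₁.trans hr)).differentiableAt).differentiableWithinAt
    · intro r hr
      rw [interior_Ici] at hr
      have hr' : R₀ < r := hR₀R₁.trans hr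
      have hr0 : 0 < r := hR₀.trans hr'
      rw [(hhderiv r hr').deriv]
      have := u'bound r hr.le
      have : u' r ≤ -(K / r) := this
      have hKr : K * r⁻¹ = K / r := by ring
      linarith [hKr.le, hKr.ge]
  have main : ∀ r, R₁ < r → u r ≤ u R₁ - K * Real.log (r / R₁) := by
    intro r hr
    have hr0 : 0 < r := hR₁pos.trans hr
    have hh := hhant Set.self_mem_Ici (le_of_lt hr : R₁ ≤ r) hr.le
    simp only [hhdef] at hh
    rw [Real.log_div (ne_of_gt hr0) (ne_of_gt hR₁pos)]
    nlinarith [hh]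
  constructor
  · have hlogtop : Tendsto (fun r : ℝ => Real.log (r / R₁)) atTop atTop :=
      Real.tendsto_log_atTop.comp (tendsto_id.atTop_div_const hR₁pos)
    have hmul : Tendsto (fun r : ℝ => K * Real.log (r / R₁)) atTop atTop :=
      hlogtop.const_mul_atTop hK
    have hbot : Tendsto (fun r : ℝ => u R₁ - K * Real.log (r / R₁)) atTop atBot := by
      have := tendsto_neg_atTop_atBot.comp hmul
      have h2 : Tendsto (fun r : ℝ => -(K * Real.log (r / R₁))) atTop atBot := this
      have := tendsto_atBot_add_const_left atTop (u R₁) h2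
      simpa [sub_eq_add_neg] using this
    refine tendsto_atBot_mono' atTop ?_ hbot
    filter_upwards [eventually_gt_atTop R₁] with r hr
    exact main r hr
  · exact ⟨R₁, le_of_lt hR₀R₁, K, hK, 1, one_pos, fun r hr => by
      simpa using main r hr⟩
end

section
/- (Nonexistence of positive solutions of the comparison inequality.) Let R₀ > 0, A ≥ 0, and c > 0. There is no twice continuously differentiable function v : [R₀,∞) → ℝ satisfying v(r) > 0 and v''(r) ≤ (A/r² − c)·v(r) for all r ≥ R₀. -/
/-!
Past some `R₁ ≥ R₀` we have `A / r² ≤ c / 2`, so `v'' ≤ -(c/2) v < 0` there and `v` is concave.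
A positive concave function on a half-line cannot have a negative slope anywhere (its tangent
line would eventually go below zero), so `v' ≥ 0` and `v ≥ v R₁ > 0` on `[R₁, ∞)`. Then
`v'' ≤ -(c/2) v R₁` is bounded away from zero, which drives `v'` negative: a contradiction.
-/

open Set Filter

section HalfLine

variable {f f' : ℝ → ℝ} {a : ℝ}

lemma antitoneOn_Ici_of_hasDerivWithinAt_nonpos
    (hf : ∀ x ∈ Ici a, HasDerivWithinAt f (f' x) (Ici a) x) (hf' : ∀ x ∈ Ici a, f' x ≤ 0) :
    AntitoneOn f (Ici a) :=
  antitoneOn_of_hasDerivWithinAt_nonpos (convex_Ici a) (fun x hx ↦ (hf x hx).continuousWithinAt)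
    (by rw [interior_Ici]; exact fun x hx ↦ (hf x (mem_Ici_of_Ioi hx)).mono Ioi_subset_Ici_self)
    (by rw [interior_Ici]; exact fun x hx ↦ hf' x (mem_Ici_of_Ioi hx))

lemma monotoneOn_Ici_of_hasDerivWithinAt_nonneg
    (hf : ∀ x ∈ Ici a, HasDerivWithinAt f (f' x) (Ici a) x) (hf' : ∀ x ∈ Ici a, 0 ≤ f' x) :
    MonotoneOn f (Ici a) :=
  monotoneOn_of_hasDerivWithinAt_nonneg (convex_Ici a) (fun x hx ↦ (hf x hx).continuousWithinAt)
    (by rw [interior_Ici]; exact fun x hx ↦ (hf x (mem_Ici_of_Ioi hx)).mono Ioi_subset_Ici_self)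
    (by rw [interior_Ici]; exact fun x hx ↦ hf' x (mem_Ici_of_Ioi hx))

lemma le_add_mul_sub_of_hasDerivWithinAt_Ici_le {C : ℝ}
    (hf : ∀ x ∈ Ici a, HasDerivWithinAt f (f' x) (Ici a) x) (hC : ∀ x ∈ Ici a, f' x ≤ C)
    {x : ℝ} (hx : a ≤ x) : f x ≤ f a + C * (x - a) := by
  have hanti : AntitoneOn (fun t ↦ f t - C * t) (Ici a) :=
    antitoneOn_Ici_of_hasDerivWithinAt_nonpos
      (fun t ht ↦ by simpa using (hf t ht).fun_sub ((hasDerivWithinAt_id t _).const_mul C))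
      (fun t ht ↦ sub_nonpos.mpr (hC t ht))
  have := hanti self_mem_Ici hx hx
  simp only at this
  linarith

lemma exists_neg_of_hasDerivWithinAt_Ici_le_neg {C : ℝ} (hC₀ : C < 0)
    (hf : ∀ x ∈ Ici a, HasDerivWithinAt f (f' x) (Ici a) x) (hC : ∀ x ∈ Ici a, f' x ≤ C) :
    ∃ x ∈ Ici a, f x < 0 := by
  have hM : 0 ≤ max 0 (f a) / -C := div_nonneg (le_max_left _ _) (by linarith)
  have hax : a ≤ a + max 0 (f a) / -C + 1 := by linarith
  have hslope : C * (a + max 0 (f a) / -C + 1 - a) = -max 0 (f a) + C := by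
    field_simp [hC₀.ne]
    ring
  refine ⟨_, hax, ?_⟩
  linarith [le_add_mul_sub_of_hasDerivWithinAt_Ici_le hf hC hax, le_max_right 0 (f a)]

lemma deriv_nonneg_of_pos_of_antitoneOn_Ici
    (hf : ∀ x ∈ Ici a, HasDerivWithinAt f (f' x) (Ici a) x) (hpos : ∀ x ∈ Ici a, 0 < f x)
    (hanti : AntitoneOn f' (Ici a)) : ∀ x ∈ Ici a, 0 ≤ f' x := by
  intro r hr
  by_contra! hneg
  have hsub : Ici r ⊆ Ici a := Ici_subset_Ici.mpr hr
  obtain ⟨x, hx, hfx⟩ := exists_neg_of_hasDerivWithinAt_Ici_le_neg hneg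
    (fun t ht ↦ (hf t (hsub ht)).mono hsub) (fun t ht ↦ hanti hr (hsub ht) ht)
  exact (hpos x (hsub hx)).not_gt hfx

end HalfLine

lemma not_forall_pos_of_hasDerivWithinAt_le_neg_mul {v v' v'' : ℝ → ℝ} {a k : ℝ} (hk : 0 < k)
    (hv' : ∀ r ∈ Ici a, HasDerivWithinAt v (v' r) (Ici a) r)
    (hv'' : ∀ r ∈ Ici a, HasDerivWithinAt v' (v'' r) (Ici a) r)
    (hle : ∀ r ∈ Ici a, v'' r ≤ -k * v r) : ¬ ∀ r ∈ Ici a, 0 < v r := by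
  intro hpos
  have hconcave : AntitoneOn v' (Ici a) := antitoneOn_Ici_of_hasDerivWithinAt_nonpos hv''
    (fun r hr ↦ (hle r hr).trans (by nlinarith [hpos r hr]))
  have hmono : MonotoneOn v (Ici a) := monotoneOn_Ici_of_hasDerivWithinAt_nonneg hv'
    (deriv_nonneg_of_pos_of_antitoneOn_Ici hv' hpos hconcave)
  have hbound : ∀ r ∈ Ici a, v'' r ≤ -k * v a := fun r hr ↦
    (hle r hr).trans (by nlinarith [hmono self_mem_Ici hr hr])
  obtain ⟨r, hr, hneg⟩ :=
    exists_neg_of_hasDerivWithinAt_Ici_le_neg (by nlinarith [hpos a self_mem_Ici]) hv'' hbound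
  exact hneg.not_ge (deriv_nonneg_of_pos_of_antitoneOn_Ici hv' hpos hconcave r hr)

lemma eventually_div_sq_le (A : ℝ) {ε : ℝ} (hε : 0 < ε) : ∀ᶠ r in atTop, A / r ^ 2 ≤ ε := by
  have : Tendsto (fun r : ℝ ↦ A / r ^ 2) atTop (nhds 0) := by
    simpa [div_eq_mul_inv] using
      (tendsto_inv_atTop_zero.comp (tendsto_pow_atTop two_ne_zero)).const_mul A
  exact this.eventually (ge_mem_nhds hε)

theorem no_positive_subsolution_general
    (R₀ A c : ℝ) (hc : 0 < c) :
    ¬ ∃ v v' v'' : ℝ → ℝ,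
      ContDiffOn ℝ 2 v (Set.Ici R₀) ∧
      (∀ r ∈ Set.Ici R₀, HasDerivWithinAt v (v' r) (Set.Ici R₀) r) ∧
      (∀ r ∈ Set.Ici R₀, HasDerivWithinAt v' (v'' r) (Set.Ici R₀) r) ∧
      (∀ r ∈ Set.Ici R₀, 0 < v r) ∧
      (∀ r ∈ Set.Ici R₀, v'' r ≤ (A / r ^ 2 - c) * v r) := by
  rintro ⟨v, v', v'', -, hv', hv'', hpos, hle⟩
  obtain ⟨N, hN⟩ := eventually_atTop.mp (eventually_div_sq_le A (half_pos hc))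
  set R₁ := max R₀ N
  have hsub : Ici R₁ ⊆ Ici R₀ := Ici_subset_Ici.mpr (le_max_left _ _)
  refine not_forall_pos_of_hasDerivWithinAt_le_neg_mul (half_pos hc)
    (fun r hr ↦ (hv' r (hsub hr)).mono hsub) (fun r hr ↦ (hv'' r (hsub hr)).mono hsub)
    (fun r hr ↦ ?_) (fun r hr ↦ hpos r (hsub hr))
  have hA : A / r ^ 2 ≤ c / 2 := hN r (le_of_max_le_right hr)
  nlinarith [hle r (hsub hr), hpos r (hsub hr)]

/-- there is no positive `C²` function on `[R₀,∞)` satisfying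
`v'' ≤ (A/r² - c) v` with `A ≥ 0` and `c > 0`. -/
theorem no_positive_subsolution
    (R₀ A c : ℝ) (hR₀ : 0 < R₀) (hA : 0 ≤ A) (hc : 0 < c) :
    ¬ ∃ v v' v'' : ℝ → ℝ,
      ContDiffOn ℝ 2 v (Set.Ici R₀) ∧
      (∀ r ∈ Set.Ici R₀, HasDerivWithinAt v (v' r) (Set.Ici R₀) r) ∧
      (∀ r ∈ Set.Ici R₀, HasDerivWithinAt v' (v'' r) (Set.Ici R₀) r) ∧
      (∀ r ∈ Set.Ici R₀, 0 < v r) ∧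
      (∀ r ∈ Set.Ici R₀, v'' r ≤ (A / r ^ 2 - c) * v r) :=
  no_positive_subsolution_general R₀ A c hc
end

section
/- (Negativity of the energy of the plateau function.) Let N ≥ 2, λ > 0, and let f : ℝ → ℝ be continuous with primitive F(u) := ∫₀ᵘ f(s) ds, and suppose there exists γ > 0 with F(γ) > 0. For ρ > 2γ define ω_ρ : [0,ρ] → ℝ by ω_ρ(r) = γ on [0, ρ−2γ] and ω_ρ(r) = (ρ−r)/2 on [ρ−2γ, ρ]. Then ω_ρ is 1-Lipschitz with ω_ρ(ρ) = 0, and there exists ρ₀ > 2γ such that for all ρ > ρ₀: J(λ, ω_ρ) := ∫₀^ρ r^{N−1}(1−√(1−ω_ρ'(r)²)) dr − λ∫₀^ρ r^{N−1} F(ω_ρ(r)) dr < 0. -/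
/-!
On `[0, ρ - 2γ]` the plateau function is the constant `γ`, so it has zero kinetic energy there and
its potential energy is `-λ F(γ) (ρ - 2γ)ᴺ / N`. On the boundary layer `[ρ - 2γ, ρ]` both energies
are `O(ρᴺ - (ρ - 2γ)ᴺ) = O(ρᴺ⁻¹)`, since the slope is `-1/2` and `F` is bounded below on `[0, γ]`.
The bulk term, negative because `F(γ) > 0` and of order `ρᴺ`, therefore wins for large `ρ`.
-/

open Set Filter Topology MeasureTheory intervalIntegral

/-- The plateau function `ω_ρ`: equal to `γ` on `[0, ρ-2γ]` and to `(ρ-r)/2` on `[ρ-2γ, ρ]`. -/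
noncomputable def plateau (γ ρ : ℝ) : ℝ → ℝ :=
  fun r => if r ≤ ρ - 2 * γ then γ else (ρ - r) / 2

section Plateau

variable {γ ρ r : ℝ}

lemma plateau_eq_min (γ ρ : ℝ) : plateau γ ρ = fun r => min γ ((ρ - r) / 2) := by
  funext r
  by_cases h : r ≤ ρ - 2 * γ
  · rw [plateau, if_pos h, min_eq_left (by linarith)]
  · rw [plateau, if_neg h, min_eq_right (by linarith)]

lemma continuous_plateau (γ ρ : ℝ) : Continuous (plateau γ ρ) := by
  rw [plateau_eq_min]
  fun_prop

lemma lipschitzWith_plateau (γ ρ : ℝ) : LipschitzWith 1 (plateau γ ρ) := by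
  have hlin : LipschitzWith 1 fun r : ℝ => (ρ - r) / 2 := .of_dist_le_mul fun x y => by
    rw [Real.dist_eq, Real.dist_eq, show (ρ - x) / 2 - (ρ - y) / 2 = -(x - y) / 2 by ring,
      abs_div, abs_neg, abs_two, NNReal.coe_one, one_mul]
    linarith [abs_nonneg (x - y)]
  simpa [plateau_eq_min] using (LipschitzWith.const γ).min hlin

lemma plateau_self (hγ : 0 ≤ γ) (ρ : ℝ) : plateau γ ρ ρ = 0 := by
  simp [plateau_eq_min, hγ]

lemma plateau_of_le (h : r ≤ ρ - 2 * γ) : plateau γ ρ r = γ := if_pos h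

lemma plateau_mem_Icc (hγ : 0 ≤ γ) (hr : r ≤ ρ) : plateau γ ρ r ∈ Icc 0 γ := by
  rw [plateau_eq_min]
  exact ⟨le_min hγ (by linarith), min_le_left _ _⟩

lemma deriv_plateau_of_lt (h : r < ρ - 2 * γ) : deriv (plateau γ ρ) r = 0 := by
  have he : plateau γ ρ =ᶠ[𝓝 r] fun _ => γ := by
    filter_upwards [Iio_mem_nhds h] with x hx
    exact plateau_of_le hx.le
  rw [he.deriv_eq, deriv_const]

lemma deriv_plateau_of_gt (h : ρ - 2 * γ < r) : deriv (plateau γ ρ) r = -1 / 2 := by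
  have he : plateau γ ρ =ᶠ[𝓝 r] fun x => (ρ - x) / 2 := by
    filter_upwards [Ioi_mem_nhds h] with x hx
    exact if_neg (not_le.2 hx)
  rw [he.deriv_eq]
  simp

lemma integral_kinetic_plateau (n : ℕ) (hγ : 0 ≤ γ) (hρ : 2 * γ ≤ ρ) :
    ∫ r in (0:ℝ)..ρ, r ^ n * (1 - √(1 - deriv (plateau γ ρ) r ^ 2)) =
      (1 - √3 / 2) * ((ρ ^ (n + 1) - (ρ - 2 * γ) ^ (n + 1)) / (n + 1)) := by
  set φ := fun r => r ^ n * (1 - √(1 - deriv (plateau γ ρ) r ^ 2))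
  have hsqrt : √(1 - (-1 / 2 : ℝ) ^ 2) = √3 / 2 := by
    rw [show (1 : ℝ) - (-1 / 2) ^ 2 = 3 / 2 ^ 2 by norm_num, Real.sqrt_div (by norm_num),
      Real.sqrt_sq (by norm_num)]
  have hflat : EqOn φ (fun _ => 0) (Ioo 0 (ρ - 2 * γ)) := fun r hr => by
    simp [φ, deriv_plateau_of_lt hr.2]
  have hslope : EqOn φ (fun r => (1 - √3 / 2) * r ^ n) (Ioo (ρ - 2 * γ) ρ) := fun r hr => by
    simp only [φ, deriv_plateau_of_gt hr.1, hsqrt]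
    ring
  have h0 : 0 ≤ ρ - 2 * γ := by linarith
  have h1 : ρ - 2 * γ ≤ ρ := by linarith
  rw [← integral_add_adjacent_intervals
      ((intervalIntegrable_congr_uIoo (uIoo_of_le h0 ▸ hflat)).2 intervalIntegrable_const)
      ((intervalIntegrable_congr_uIoo (uIoo_of_le h1 ▸ hslope)).2
        ((continuous_const.mul (continuous_pow n)).intervalIntegrable _ _)),
    integral_congr_Ioo_of_le h0 hflat, integral_congr_Ioo_of_le h1 hslope,
    intervalIntegral.integral_const_mul, integral_pow, intervalIntegral.integral_zero, zero_add]

lemma le_integral_potential_plateau {F : ℝ → ℝ} (hF : Continuous F) {m : ℝ}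
    (hm : ∀ u ∈ Icc 0 γ, m ≤ F u) (n : ℕ) (hγ : 0 ≤ γ) (hρ : 2 * γ ≤ ρ) :
    F γ * ((ρ - 2 * γ) ^ (n + 1) / (n + 1)) +
        m * ((ρ ^ (n + 1) - (ρ - 2 * γ) ^ (n + 1)) / (n + 1)) ≤
      ∫ r in (0:ℝ)..ρ, r ^ n * F (plateau γ ρ r) := by
  have hcont : Continuous fun r => r ^ n * F (plateau γ ρ r) :=
    (continuous_pow n).mul (hF.comp (continuous_plateau γ ρ))
  have h0 : 0 ≤ ρ - 2 * γ := by linarith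
  have h1 : ρ - 2 * γ ≤ ρ := by linarith
  have hbulk : ∫ r in (0:ℝ)..ρ - 2 * γ, r ^ n * F (plateau γ ρ r) =
      F γ * ((ρ - 2 * γ) ^ (n + 1) / (n + 1)) := by
    rw [integral_congr (g := fun r => F γ * r ^ n) fun r hr => by
        rw [uIcc_of_le h0] at hr
        simp [plateau_of_le hr.2, mul_comm],
      intervalIntegral.integral_const_mul, integral_pow]
    simp
  have hlayer : ∫ r in ρ - 2 * γ..ρ, m * r ^ n ≤ ∫ r in ρ - 2 * γ..ρ, r ^ n * F (plateau γ ρ r) :=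
    integral_mono_on h1 ((continuous_const.mul (continuous_pow n)).intervalIntegrable _ _)
      (hcont.intervalIntegrable _ _) fun r hr => by
        rw [mul_comm]
        exact mul_le_mul_of_nonneg_left (hm _ (plateau_mem_Icc hγ hr.2))
          (pow_nonneg (h0.trans hr.1) n)
  rw [intervalIntegral.integral_const_mul, integral_pow] at hlayer
  rw [← integral_add_adjacent_intervals (hcont.intervalIntegrable 0 (ρ - 2 * γ))
    (hcont.intervalIntegrable _ ρ), hbulk]
  linarith

end Plateau

lemma eventually_mul_pow_sub_pow_lt (A δ : ℝ) {B : ℝ} (hB : 0 < B) (N : ℕ) :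
    ∀ᶠ x in atTop, A * (x ^ N - (x - δ) ^ N) < B * (x - δ) ^ N := by
  have hq : Tendsto (fun x : ℝ => (1 - δ / x) ^ N) atTop (𝓝 1) := by
    simpa using ((tendsto_const_nhds (x := (1 : ℝ))).sub
      (tendsto_const_nhds.div_atTop tendsto_id)).pow N
  have hlim :
      Tendsto (fun x => A * (1 - (1 - δ / x) ^ N) - B * (1 - δ / x) ^ N) atTop (𝓝 (-B)) := by
    simpa using ((tendsto_const_nhds (x := A)).mul ((tendsto_const_nhds (x := (1 : ℝ))).sub hq)).sub
      ((tendsto_const_nhds (x := B)).mul hq)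
  filter_upwards [hlim.eventually (gt_mem_nhds (neg_neg_of_pos hB)), eventually_gt_atTop 0]
    with x hx hx0
  have hscale : x ^ N * (1 - δ / x) ^ N = (x - δ) ^ N := by
    rw [← mul_pow]
    field_simp
  linear_combination mul_neg_of_pos_of_neg (pow_pos hx0 N) hx + (A + B) * hscale

/-- negativity of the energy of the plateau function: if `F(γ) > 0` for some
`γ > 0`, then `ω_ρ ∈ K_ρ` and `J(λ, ω_ρ) < 0` for all sufficiently large `ρ`. -/
theorem plateau_energy_negative
    (N : ℕ) (hN : 2 ≤ N) (lam : ℝ) (hlam : 0 < lam)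
    (f : ℝ → ℝ) (hf : Continuous f)
    (γ : ℝ) (hγ : 0 < γ) (hFγ : 0 < ∫ s in (0:ℝ)..γ, f s) :
    (∀ ρ, 2 * γ < ρ →
      LipschitzOnWith 1 (plateau γ ρ) (Set.Icc 0 ρ) ∧ plateau γ ρ ρ = 0) ∧
    ∃ ρ₀ > 2 * γ, ∀ ρ > ρ₀,
      (∫ r in (0:ℝ)..ρ, r ^ (N - 1) * (1 - Real.sqrt (1 - (deriv (plateau γ ρ) r) ^ 2))) -
        lam * ∫ r in (0:ℝ)..ρ, r ^ (N - 1) * ∫ s in (0:ℝ)..(plateau γ ρ r), f s < 0 := by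
  refine ⟨fun ρ _ => ⟨(lipschitzWith_plateau γ ρ).lipschitzOnWith, plateau_self hγ.le ρ⟩, ?_⟩
  obtain ⟨n, rfl⟩ : ∃ n, N = n + 1 := ⟨N - 1, by omega⟩
  set F : ℝ → ℝ := fun u => ∫ s in (0:ℝ)..u, f s
  have hF : Continuous F := continuous_primitive (fun a b => hf.intervalIntegrable a b) 0
  obtain ⟨m, hm⟩ := isCompact_Icc.bddBelow_image (hF.continuousOn (s := Icc 0 γ))
  obtain ⟨ρ₁, hρ₁⟩ := eventually_atTop.1 <|
    eventually_mul_pow_sub_pow_lt (1 - √3 / 2 - lam * m) (2 * γ) (mul_pos hlam hFγ) (n + 1)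
  refine ⟨max ρ₁ (2 * γ + 1), by linarith [le_max_right ρ₁ (2 * γ + 1)], fun ρ hρ => ?_⟩
  have hρ2γ : 2 * γ ≤ ρ := by linarith [le_max_right ρ₁ (2 * γ + 1)]
  have hpot := mul_le_mul_of_nonneg_left
    (le_integral_potential_plateau hF (fun u hu => hm ⟨u, hu, rfl⟩) n hγ.le hρ2γ) hlam.le
  have hkey := div_lt_div_of_pos_right (hρ₁ ρ (le_max_left ρ₁ _ |>.trans hρ.le))
    (by positivity : (0 : ℝ) < n + 1)
  simp only [F] at hpot
  rw [mul_div_assoc, mul_div_assoc] at hkey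
  rw [Nat.add_sub_cancel, integral_kinetic_plateau n hγ.le hρ2γ]
  linarith
end
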